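/- arXiv:1509.08224 — 8 statements merged into one kernel-verified Lean document; each statement's English description precedes it below -/
import Mathlib

section
/- The function H_l is strictly convex on the interval [1, Ψ(f₀)]. -/
open Real Set Filter Topology

/-!
Write `H_l(y) = √y (a + c (log y)²)` with `a = -λ/α²` and `c = (δ - λ/α)/(8α) > 0`. Then
`H_l''(y) = (8c - a - c (log y)²) / (4 y^{3/2})`, which is positive on `(1, K)` as soon as
`c (log K)² ≤ 8c - a = δ/α`. For `K = Ψ(f₀)` one has `log K = 2(s - 1)` with
`s = √((αδ+λ)/(αδ-λ))`, and `δ/α = 4c(s² + 1)`, so the condition reads `(s - 1)² ≤ s² + 1`.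
-/

noncomputable def sqrtMulLogSq (a c y : ℝ) : ℝ := √y * (a + c * log y ^ 2)

section SqrtMulLogSq

variable {a c x : ℝ}

theorem hasDerivAt_sqrtMulLogSq (hx : 0 < x) :
    HasDerivAt (sqrtMulLogSq a c) ((a + c * log x ^ 2 + 4 * c * log x) / (2 * √x)) x := by
  have hlog := hasDerivAt_log hx.ne'
  have h : HasDerivAt (fun y ↦ √y * (a + c * log y ^ 2)) _ x :=
    (hasDerivAt_sqrt hx.ne').mul (((hlog.fun_pow 2).const_mul c).const_add a)
  refine h.congr_deriv ?_
  have hsx : 0 < √x := sqrt_pos.mpr hx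
  have hsq : √x ^ 2 = x := sq_sqrt hx.le
  field_simp
  ring_nf
  rw [hsq]

theorem hasDerivAt_deriv_sqrtMulLogSq (hx : 0 < x) :
    HasDerivAt (deriv (sqrtMulLogSq a c)) ((8 * c - a - c * log x ^ 2) / (4 * x * √x)) x := by
  have hderiv : deriv (sqrtMulLogSq a c)
      =ᶠ[𝓝 x] fun y ↦ (a + c * log y ^ 2 + 4 * c * log y) / (2 * √y) :=
    eventually_of_mem (Ioi_mem_nhds hx) fun y hy ↦ (hasDerivAt_sqrtMulLogSq hy).deriv
  refine HasDerivAt.congr_of_eventuallyEq ?_ hderiv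
  have hlog := hasDerivAt_log hx.ne'
  have hsx : 0 < √x := sqrt_pos.mpr hx
  have h : HasDerivAt (fun y ↦ (a + c * log y ^ 2 + 4 * c * log y) / (2 * √y)) _ x :=
    ((((hlog.fun_pow 2).const_mul c).const_add a).fun_add (hlog.const_mul (4 * c))).div
      ((hasDerivAt_sqrt hx.ne').const_mul 2) (by positivity)
  refine h.congr_deriv ?_
  have hsq : √x ^ 2 = x := sq_sqrt hx.le
  field_simp
  ring_nf
  rw [hsq]
  ring

theorem strictConvexOn_sqrtMulLogSq {K : ℝ} (hc : 0 < c) (hK : c * log K ^ 2 ≤ 8 * c - a) :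
    StrictConvexOn ℝ (Icc 1 K) (sqrtMulLogSq a c) := by
  refine strictConvexOn_of_deriv2_pos (convex_Icc 1 K) ?_ ?_
  · exact fun x hx ↦
      (hasDerivAt_sqrtMulLogSq (one_pos.trans_le hx.1)).continuousAt.continuousWithinAt
  rw [interior_Icc]
  rintro x ⟨hx1, hxK⟩
  have hx : 0 < x := one_pos.trans hx1
  rw [Function.iterate_succ_apply, Function.iterate_one,
    (hasDerivAt_deriv_sqrtMulLogSq hx).deriv]
  have hlog_lt : log x ^ 2 < log K ^ 2 :=
    pow_lt_pow_left₀ (log_lt_log hx hxK) (log_nonneg hx1.le) two_ne_zero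
  have hclog_lt : c * log x ^ 2 < c * log K ^ 2 := mul_lt_mul_of_pos_left hlog_lt hc
  apply div_pos (by linarith)
  positivity

end SqrtMulLogSq

theorem stmt_1_general (α δ lam : ℝ) (hα : 0 < α) (hlam : 0 < lam)
    (hltd : lam < α * δ)
    (f₀ : ℝ)
    (hf₀ : f₀ = (1 / Real.sqrt (2 * α)) * (Real.sqrt ((α * δ + lam) / (α * δ - lam)) - 1))
    (Ψ : ℝ → ℝ) (hΨ : ∀ x, Ψ x = Real.exp (2 * Real.sqrt (2 * α) * x))
    (Hl : ℝ → ℝ)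
    (hHl : ∀ y, 0 < y → Hl y = Real.sqrt y *
      (-(lam / α ^ 2) + ((δ - lam / α) / (8 * α)) * (Real.log y) ^ 2)) :
    StrictConvexOn ℝ (Set.Icc 1 (Ψ f₀)) Hl := by
  set c := (δ - lam / α) / (8 * α)
  set r := (α * δ + lam) / (α * δ - lam)
  have hgap : 0 < α * δ - lam := by linarith
  have hc : 0 < c := div_pos (by rw [sub_pos, div_lt_iff₀ hα]; linarith) (by positivity)
  have hr : 0 ≤ r := div_nonneg (by linarith) hgap.le
  have hlogΨ : log (Ψ f₀) = 2 * (√r - 1) := by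
    have : √(2 * α) ≠ 0 := (sqrt_pos.mpr (by positivity)).ne'
    rw [hΨ, log_exp, hf₀]
    field_simp
  have h8c : 8 * c - -(lam / α ^ 2) = 4 * c * (r + 1) := by
    have : δ * α - lam ≠ 0 := by rw [mul_comm]; exact hgap.ne'
    simp only [c, r]
    rw [mul_comm α δ]
    field_simp
    ring
  refine (strictConvexOn_sqrtMulLogSq hc ?_).congr fun y hy ↦ (hHl y (one_pos.trans_le hy.1)).symm
  calc c * log (Ψ f₀) ^ 2 = 4 * c * (√r - 1) ^ 2 := by rw [hlogΨ]; ring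
    _ ≤ 4 * c * (√r ^ 2 + 1) := by gcongr; nlinarith [sqrt_nonneg r]
    _ = 8 * c - -(lam / α ^ 2) := by rw [sq_sqrt hr, h8c]

/-- H_l is strictly convex on [1, Ψ(f₀)]. -/
theorem stmt_1 (α δ lam : ℝ) (hα : 0 < α) (hδ : 0 < δ) (hlam : 0 < lam)
    (hltd : lam < α * δ)
    (f₀ : ℝ)
    (hf₀ : f₀ = (1 / Real.sqrt (2 * α)) * (Real.sqrt ((α * δ + lam) / (α * δ - lam)) - 1))
    (Ψ : ℝ → ℝ) (hΨ : ∀ x, Ψ x = Real.exp (2 * Real.sqrt (2 * α) * x))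
    (Hl : ℝ → ℝ)
    (hHl : ∀ y, 0 < y → Hl y = Real.sqrt y *
      (-(lam / α ^ 2) + ((δ - lam / α) / (8 * α)) * (Real.log y) ^ 2))
    (hHl0 : Hl 0 = 0) :
    StrictConvexOn ℝ (Set.Icc 1 (Ψ f₀)) Hl :=
  stmt_1_general α δ lam hα hlam hltd f₀ hf₀ Ψ hΨ Hl hHl
end

section
/- Define W₀ on [1,∞) by W₀(y)=H_l(y) for y∈[1,Ψ(f₀)] and W₀(y)=B₀ for y>Ψ(f₀). Then: (i) there exists a convex, nonpositive function w on [0,∞) with w(y)≤H_l(y) for all y∈[0,∞) and w(y)=W₀(y) for all y∈[1,∞); and (ii) every convex, nonpositive function g on [0,∞) with g≤H_l on [0,∞) satisfies g(y)≤W₀(y) for all y∈[1,∞). In particular B₀<0 and the restriction to [1,∞) of the greatest nonpositive convex minorant of H_l on [0,∞) equals W₀. -/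
/-!
In the variable `t = log y` the obstacle is `H_l (exp t) = exp (t/2) * (c t² - m)` with
`c = (δ - λ/α)/(8α)` and `m = λ/α²`, and its slope `dH_l/dy = exp (-t/2) (c t² + 4ct - m)/2`
vanishes at `T = log Ψ(f₀)`, the positive root of `c t² + 4ct = m`. On `[0, T]` this slope
increases from `-m/2` to `0`, so the function equal to the tangent line `-m(y+1)/2` of `H_l` at `1`
on `[0,1]`, to `H_l` on `[1, Ψ(f₀)]` and to `B₀ = H_l(Ψ(f₀)) = min H_l` beyond has a nondecreasing
derivative: it is a convex, nonpositive minorant of `H_l`. Conversely, a convex function bounded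
above on a half-line is nonincreasing, so every nonpositive convex minorant `g` of `H_l` satisfies
`g y ≤ g (Ψ f₀) ≤ B₀` for `y ≥ Ψ(f₀)`.
-/

open Real Set

noncomputable def obstacle (c m y : ℝ) : ℝ := √y * (c * log y ^ 2 - m)

noncomputable def obstacleSlope (c m t : ℝ) : ℝ :=
  exp (-(t / 2)) * ((c * t ^ 2 + 4 * c * t - m) / 2)

section
variable {c m : ℝ}

lemma obstacle_one : obstacle c m 1 = -m := by simp [obstacle]

lemma obstacle_exp (t : ℝ) : obstacle c m (exp t) = exp (t / 2) * (c * t ^ 2 - m) := by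
  rw [obstacle, log_exp, ← exp_half]

lemma hasDerivAt_obstacle {y : ℝ} (hy : 0 < y) :
    HasDerivAt (obstacle c m) (obstacleSlope c m (log y)) y := by
  have h := (hasDerivAt_sqrt hy.ne').fun_mul
    ((((hasDerivAt_log hy.ne').fun_pow 2).const_mul c).sub_const m)
  refine h.congr_deriv ?_
  obtain ⟨t, rfl⟩ : ∃ t, y = exp t := ⟨log y, (exp_log hy).symm⟩
  have hsq : exp t = exp (t / 2) ^ 2 := by rw [← exp_nat_mul]; ring_nf
  rw [log_exp, ← exp_half, obstacleSlope, exp_neg, hsq]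
  field_simp
  ring

lemma hasDerivAt_obstacleSlope (t : ℝ) :
    HasDerivAt (obstacleSlope c m) (exp (-(t / 2)) * ((8 * c + m - c * t ^ 2) / 4)) t := by
  have h := ((hasDerivAt_id' t).div_const 2).fun_neg.exp.fun_mul
    (((((hasDerivAt_pow 2 t).const_mul c).fun_add ((hasDerivAt_id' t).const_mul (4 * c))).sub_const
      m).div_const 2)
  refine h.congr_deriv ?_
  push_cast
  ring

lemma obstacleSlope_zero : obstacleSlope c m 0 = -(m / 2) := by simp [obstacleSlope, neg_div]

end

section
variable {c m T : ℝ}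

lemma obstacleSlope_self (hm : c * (T ^ 2 + 4 * T) = m) : obstacleSlope c m T = 0 := by
  rw [obstacleSlope, ← hm]
  ring

lemma obstacleSlope_nonneg (hc : 0 ≤ c) (hm : c * (T ^ 2 + 4 * T) = m) (hT : 0 ≤ T) {t : ℝ}
    (ht : T ≤ t) : 0 ≤ obstacleSlope c m t := by
  have hfactor : c * t ^ 2 + 4 * c * t - m = c * (t - T) * (t + T + 4) := by rw [← hm]; ring
  rw [obstacleSlope, hfactor]
  have : 0 ≤ t - T := sub_nonneg.mpr ht
  have : 0 ≤ t + T + 4 := by linarith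
  positivity

lemma monotoneOn_obstacleSlope (hc : 0 ≤ c) (hm : c * (T ^ 2 + 4 * T) = m) :
    MonotoneOn (obstacleSlope c m) (Icc 0 T) := by
  refine monotoneOn_of_hasDerivWithinAt_nonneg (convex_Icc 0 T)
    (fun t _ => (hasDerivAt_obstacleSlope t).continuousAt.continuousWithinAt)
    (fun t _ => (hasDerivAt_obstacleSlope t).hasDerivWithinAt) fun t ht => ?_
  rw [interior_Icc] at ht
  have : c * t ^ 2 ≤ c * T ^ 2 := by gcongr; exact ht.1.le; exact ht.2.le
  have : 0 ≤ c * T := mul_nonneg hc (ht.1.trans ht.2).le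
  have : 0 ≤ 8 * c + m - c * t ^ 2 := by rw [← hm]; nlinarith
  positivity

lemma monotoneOn_obstacle (hc : 0 ≤ c) (hm : c * (T ^ 2 + 4 * T) = m) (hT : 0 ≤ T) :
    MonotoneOn (obstacle c m) (Ici (exp T)) := by
  have hderiv : ∀ y ∈ Ici (exp T), HasDerivAt (obstacle c m) (obstacleSlope c m (log y)) y :=
    fun y hy => hasDerivAt_obstacle ((exp_pos T).trans_le hy)
  refine monotoneOn_of_hasDerivWithinAt_nonneg (convex_Ici _)
    (fun y hy => (hderiv y hy).continuousAt.continuousWithinAt)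
    (fun y hy => (hderiv y (interior_subset hy)).hasDerivWithinAt) fun y hy => ?_
  rw [interior_Ici] at hy
  exact obstacleSlope_nonneg hc hm hT ((le_log_iff_exp_le ((exp_pos T).trans hy)).mpr hy.le)

lemma obstacle_nonpos (hc : 0 ≤ c) (hm : c * (T ^ 2 + 4 * T) = m) {y : ℝ}
    (hy : y ∈ Icc 1 (exp T)) : obstacle c m y ≤ 0 := by
  have hlog0 : 0 ≤ log y := log_nonneg hy.1
  have hlogT : log y ≤ T := (log_le_iff_le_exp (by linarith [hy.1])).mpr hy.2
  have : c * log y ^ 2 ≤ c * T ^ 2 := by gcongr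
  have : c * log y ^ 2 - m ≤ 0 := by nlinarith
  exact mul_nonpos_of_nonneg_of_nonpos (sqrt_nonneg y) this

lemma obstacle_exp_neg (hc : 0 < c) (hm : c * (T ^ 2 + 4 * T) = m) (hT : 0 < T) :
    obstacle c m (exp T) < 0 := by
  rw [obstacle_exp, ← hm]
  have : c * T ^ 2 - c * (T ^ 2 + 4 * T) < 0 := by nlinarith
  exact mul_neg_of_pos_of_neg (exp_pos _) this

end

lemma tangent_le_obstacle {c m y : ℝ} (hc : 0 ≤ c) (hm : 0 ≤ m) (hy : 0 ≤ y) :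
    -(m * (y + 1) / 2) ≤ obstacle c m y := by
  have hsqrt : √y ≤ (y + 1) / 2 := by nlinarith [sq_sqrt hy, sq_nonneg (√y - 1)]
  have : 0 ≤ √y * (c * log y ^ 2) := by positivity
  rw [obstacle]
  nlinarith

lemma hasDerivAt_ite_le {f g : ℝ → ℝ} {f' g' a x : ℝ} (hf : HasDerivAt f f' x)
    (hg : HasDerivAt g g' x) (hfg : x = a → f a = g a ∧ f' = g') :
    HasDerivAt (fun y => if y ≤ a then f y else g y) (if x ≤ a then f' else g') x := by
  rcases lt_trichotomy x a with hxa | rfl | hxa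
  · rw [if_pos hxa.le]
    refine hf.congr_of_eventuallyEq ?_
    filter_upwards [Iio_mem_nhds hxa] with y hy using if_pos hy.le
  · obtain ⟨hval, rfl⟩ := hfg rfl
    have hleft : HasDerivWithinAt (fun y => if y ≤ x then f y else g y) f' (Iic x) x :=
      hf.hasDerivWithinAt.congr (fun y hy => if_pos hy) (if_pos le_rfl)
    have hright : HasDerivWithinAt (fun y => if y ≤ x then f y else g y) f' (Ici x) x := by
      refine hg.hasDerivWithinAt.congr (fun y hy => ?_) (by rw [if_pos le_rfl, hval])
      rcases (mem_Ici.mp hy).eq_or_lt with rfl | hy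
      · rw [if_pos le_rfl, hval]
      · rw [if_neg (not_le.mpr hy)]
    rw [if_pos le_rfl, ← hasDerivWithinAt_univ, ← Iic_union_Ici]
    exact hleft.union hright
  · rw [if_neg (not_le.mpr hxa)]
    refine hg.congr_of_eventuallyEq ?_
    filter_upwards [Ioi_mem_nhds hxa] with y hy using if_neg (not_le.mpr hy)

noncomputable def minorant (c m T : ℝ) : ℝ → ℝ := fun y =>
  if y ≤ 1 then -(m * (y + 1) / 2) else if y ≤ exp T then obstacle c m y else obstacle c m (exp T)

section
variable {c m T : ℝ}

lemma minorant_eq_obstacle {y : ℝ} (hy : y ∈ Icc 1 (exp T)) :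
    minorant c m T y = obstacle c m y := by
  rcases hy.1.eq_or_lt with rfl | hy1
  · rw [minorant, if_pos le_rfl, obstacle_one]
    ring
  · rw [minorant, if_neg (not_le.mpr hy1), if_pos hy.2]

lemma minorant_of_exp_lt {y : ℝ} (hT : 0 ≤ T) (hy : exp T < y) :
    minorant c m T y = obstacle c m (exp T) := by
  have hy1 : 1 < y := (one_le_exp hT).trans_lt hy
  rw [minorant, if_neg (not_le.mpr hy1), if_neg (not_le.mpr hy)]

-- Clamping `y` to `[1, exp T]` writes the derivative as one formula, which is monotone as a
-- composition of monotone maps.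
lemma hasDerivAt_minorant (hm : c * (T ^ 2 + 4 * T) = m) (hT : 0 ≤ T) {y : ℝ} (hy : 0 < y) :
    HasDerivAt (minorant c m T) (obstacleSlope c m (log (max 1 (min y (exp T))))) y := by
  have hline : HasDerivAt (fun y => -(m * (y + 1) / 2)) (-(m * 1 / 2)) y :=
    (((hasDerivAt_id' y).add_const 1).const_mul m |>.div_const 2).neg
  have hT1 : 1 ≤ exp T := one_le_exp hT
  have h := hasDerivAt_ite_le (a := 1) hline
    (hasDerivAt_ite_le (hasDerivAt_obstacle hy) (hasDerivAt_const y (obstacle c m (exp T)))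
      fun hyT => ⟨rfl, by rw [hyT, log_exp, obstacleSlope_self hm]⟩)
    fun hy1 => by
      subst hy1
      simp only [if_pos hT1, log_one, obstacleSlope_zero, obstacle_one]
      constructor <;> ring
  refine h.congr_deriv ?_
  split_ifs with hy1 hyT
  · rw [max_eq_left (min_le_of_left_le hy1), log_one, obstacleSlope_zero]
    ring
  · rw [min_eq_left hyT, max_eq_right (not_le.mp hy1).le]
  · rw [min_eq_right (not_le.mp hyT).le, max_eq_right hT1, log_exp, obstacleSlope_self hm]

lemma convexOn_minorant (hc : 0 ≤ c) (hm : c * (T ^ 2 + 4 * T) = m) (hT : 0 ≤ T) :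
    ConvexOn ℝ (Ici 0) (minorant c m T) := by
  have hderiv := fun y (hy : y ∈ Ioi (0 : ℝ)) => hasDerivAt_minorant hm hT hy
  have hcont : ContinuousOn (minorant c m T) (Ici 0) := by
    intro y hy
    rcases (mem_Ici.mp hy).eq_or_lt with rfl | hy
    · have hline : ContinuousAt (fun y : ℝ => -(m * (y + 1) / 2)) 0 := by fun_prop
      refine (hline.congr_of_eventuallyEq ?_).continuousWithinAt
      filter_upwards [Iio_mem_nhds one_pos] with y hy using if_pos hy.le
    · exact (hderiv y hy).continuousAt.continuousWithinAt
  have hmono : Monotone fun y => obstacleSlope c m (log (max 1 (min y (exp T)))) := by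
    intro a b hab
    have hclamp : ∀ y, max 1 (min y (exp T)) ∈ Icc 1 (exp T) :=
      fun y => ⟨le_max_left _ _, max_le (one_le_exp hT) (min_le_right _ _)⟩
    have hlog : ∀ y, log (max 1 (min y (exp T))) ∈ Icc 0 T := fun y =>
      ⟨log_nonneg (hclamp y).1, (log_le_iff_le_exp (by linarith [(hclamp y).1])).mpr (hclamp y).2⟩
    refine monotoneOn_obstacleSlope hc hm (hlog a) (hlog b)
      (log_le_log (by linarith [(hclamp a).1]) ?_)
    gcongr
  refine MonotoneOn.convexOn_of_deriv (convex_Ici 0) hcont ?_ ?_ <;> rw [interior_Ici]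
  · exact fun y hy => (hderiv y hy).differentiableAt.differentiableWithinAt
  · intro a ha b hb hab
    rw [(hderiv a ha).deriv, (hderiv b hb).deriv]
    exact hmono hab

lemma minorant_nonpos (hc : 0 ≤ c) (hm : c * (T ^ 2 + 4 * T) = m) (hT : 0 ≤ T) {y : ℝ}
    (hy : 0 ≤ y) : minorant c m T y ≤ 0 := by
  have hm0 : 0 ≤ m := hm ▸ by positivity
  have hT1 : 1 ≤ exp T := one_le_exp hT
  unfold minorant
  split_ifs with hy1 hyT
  · nlinarith
  · exact obstacle_nonpos hc hm ⟨(not_le.mp hy1).le, hyT⟩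
  · exact obstacle_nonpos hc hm ⟨hT1, le_rfl⟩

lemma minorant_le_obstacle (hc : 0 ≤ c) (hm : c * (T ^ 2 + 4 * T) = m) (hT : 0 ≤ T) {y : ℝ}
    (hy : 0 ≤ y) : minorant c m T y ≤ obstacle c m y := by
  unfold minorant
  split_ifs with hy1 hyT
  · exact tangent_le_obstacle hc (hm ▸ by positivity) hy
  · exact le_rfl
  · exact monotoneOn_obstacle hc hm hT self_mem_Ici (not_le.mp hyT).le (not_le.mp hyT).le

end

lemma ConvexOn.antitoneOn_of_le {g : ℝ → ℝ} {a C : ℝ} (hg : ConvexOn ℝ (Ici a) g)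
    (hC : ∀ y ∈ Ici a, g y ≤ C) : AntitoneOn g (Ici a) := by
  intro x hx y hy hxy
  by_contra! hlt
  have hxy : x < y := hxy.lt_of_ne (by rintro rfl; exact lt_irrefl _ hlt)
  have hCy : 0 ≤ C - g y := sub_nonneg.mpr (hC y hy)
  -- far enough to the right, the secant through `x` and `y` rises above `C`
  set z := y + (y - x) * (C - g y) / (g y - g x) + 1
  have hyz : y < z := by
    have : 0 ≤ (y - x) * (C - g y) / (g y - g x) := by
      have := sub_pos.mpr hlt
      have := sub_pos.mpr hxy
      positivity
    linarith
  have hz : z ∈ Ici a := (mem_Ici.mp hy).trans hyz.le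
  have hsecant := hg.secant_mono_aux1 hx hz hxy hyz
  have hzy : (z - y) * (g y - g x) = (y - x) * (C - g y) + (g y - g x) := by
    simp only [z]; field_simp [(sub_pos.mpr hlt).ne']; ring
  nlinarith [hC z hz, sub_pos.mpr hlt, sub_pos.mpr hxy]

lemma le_minorant {c m T : ℝ} (hT : 0 ≤ T) {g : ℝ → ℝ} (hg : ConvexOn ℝ (Ici 0) g)
    (hg0 : ∀ y ∈ Ici 0, g y ≤ 0) (hgH : ∀ y ∈ Ici 0, g y ≤ obstacle c m y) {y : ℝ}
    (hy : 1 ≤ y) : g y ≤ minorant c m T y := by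
  rcases le_or_gt y (exp T) with hyT | hyT
  · rw [minorant_eq_obstacle ⟨hy, hyT⟩]
    exact hgH y (zero_le_one.trans hy)
  · rw [minorant_of_exp_lt hT hyT]
    have hT0 : exp T ∈ Ici 0 := (exp_pos T).le
    exact (hg.antitoneOn_of_le hg0 hT0 (hT0.trans hyT.le) hyT.le).trans (hgH _ hT0)

/-- `criticalLog α δ lam = 2 √(2α) f₀`, so that `exp (criticalLog α δ lam) = Ψ f₀`. -/
noncomputable def criticalLog (α δ lam : ℝ) : ℝ := 2 * (√((α * δ + lam) / (α * δ - lam)) - 1)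

section
variable {α δ lam : ℝ}

lemma criticalLog_pos (hlam : 0 < lam) (hltd : lam < α * δ) : 0 < criticalLog α δ lam := by
  have hs : 1 < √((α * δ + lam) / (α * δ - lam)) :=
    (lt_sqrt zero_le_one).mpr (by rw [one_pow, one_lt_div (sub_pos.mpr hltd)]; linarith)
  rw [criticalLog]
  linarith

lemma criticalLog_spec (hα : 0 < α) (hlam : 0 < lam) (hltd : lam < α * δ) :
    (δ - lam / α) / (8 * α) * (criticalLog α δ lam ^ 2 + 4 * criticalLog α δ lam) =
      lam / α ^ 2 := by
  have hd : 0 < α * δ - lam := by linarith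
  have hs : √((α * δ + lam) / (α * δ - lam)) ^ 2 * (α * δ - lam) = α * δ + lam := by
    rw [sq_sqrt (div_pos (by linarith) hd).le, div_mul_cancel₀ _ hd.ne']
  rw [criticalLog]
  generalize √((α * δ + lam) / (α * δ - lam)) = s at hs
  field_simp
  linear_combination 4 * hs

lemma obstacle_exp_eq_of_mul_sqrt_eq {T f : ℝ} (hα : 0 < α)
    (hm : (δ - lam / α) / (8 * α) * (T ^ 2 + 4 * T) = lam / α ^ 2)
    (hf : f * √(2 * α) = T / 2) :
    obstacle ((δ - lam / α) / (8 * α)) (lam / α ^ 2) (exp T) =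
      -(2 * f / (α * √(2 * α))) * (α * δ - lam) * exp (f * √(2 * α)) := by
  have hr : 0 < √(2 * α) := by positivity
  have hr2 : √(2 * α) ^ 2 = 2 * α := sq_sqrt (by positivity)
  rw [obstacle_exp, ← hm, hf, eq_div_of_mul_eq hr.ne' hf]
  field_simp
  rw [hr2]
  field_simp
  ring

end

lemma eqOn_obstacle {H : ℝ → ℝ} {c m : ℝ} (hpos : ∀ y, 0 < y → H y = √y * (-m + c * log y ^ 2))
    (hzero : H 0 = 0) : EqOn H (obstacle c m) (Ici 0) := by
  intro y hy
  rcases (mem_Ici.mp hy).eq_or_lt with rfl | hy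
  · simp [hzero, obstacle]
  · rw [hpos y hy, obstacle]
    ring

theorem stmt_3_general (α δ lam : ℝ) (hα : 0 < α) (hlam : 0 < lam)
    (hltd : lam < α * δ)
    (f₀ : ℝ)
    (hf₀ : f₀ = (1 / Real.sqrt (2 * α)) * (Real.sqrt ((α * δ + lam) / (α * δ - lam)) - 1))
    (Ψ : ℝ → ℝ) (hΨ : ∀ x, Ψ x = Real.exp (2 * Real.sqrt (2 * α) * x))
    (Hl : ℝ → ℝ)
    (hHl : ∀ y, 0 < y → Hl y = Real.sqrt y *
      (-(lam / α ^ 2) + ((δ - lam / α) / (8 * α)) * (Real.log y) ^ 2))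
    (hHl0 : Hl 0 = 0)
    (B₀ : ℝ)
    (hB₀ : B₀ = -(2 * f₀ / (α * Real.sqrt (2 * α))) * (α * δ - lam) *
      Real.exp (f₀ * Real.sqrt (2 * α)))
    (W₀ : ℝ → ℝ)
    (hW₀l : ∀ y ∈ Set.Icc 1 (Ψ f₀), W₀ y = Hl y)
    (hW₀r : ∀ y, Ψ f₀ < y → W₀ y = B₀) :
    (∃ w : ℝ → ℝ, ConvexOn ℝ (Set.Ici 0) w ∧ (∀ y ∈ Set.Ici (0 : ℝ), w y ≤ 0) ∧
      (∀ y ∈ Set.Ici (0 : ℝ), w y ≤ Hl y) ∧ (∀ y ∈ Set.Ici (1 : ℝ), w y = W₀ y)) ∧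
    (∀ g : ℝ → ℝ, ConvexOn ℝ (Set.Ici 0) g → (∀ y ∈ Set.Ici (0 : ℝ), g y ≤ 0) →
      (∀ y ∈ Set.Ici (0 : ℝ), g y ≤ Hl y) → ∀ y ∈ Set.Ici (1 : ℝ), g y ≤ W₀ y) ∧
    B₀ < 0 := by
  have hT := criticalLog_pos hlam hltd
  have hm := criticalLog_spec hα hlam hltd
  have hc : 0 < (δ - lam / α) / (8 * α) :=
    div_pos (sub_pos.mpr ((div_lt_iff₀ hα).mpr (by linarith))) (by positivity)
  set T := criticalLog α δ lam
  set c := (δ - lam / α) / (8 * α)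
  set m := lam / α ^ 2
  have hf : f₀ * √(2 * α) = T / 2 := by
    rw [hf₀]
    field_simp
    rfl
  have hΨf : Ψ f₀ = exp T := by
    rw [hΨ]
    congr 1
    linarith
  have hHl' : EqOn Hl (obstacle c m) (Ici 0) := eqOn_obstacle hHl hHl0
  have hB : B₀ = obstacle c m (exp T) :=
    hB₀.trans (obstacle_exp_eq_of_mul_sqrt_eq hα hm hf).symm
  have hW : ∀ y ∈ Ici 1, W₀ y = minorant c m T y := by
    intro y hy
    rcases le_or_gt y (exp T) with hyT | hyT
    · rw [hW₀l y ⟨hy, hΨf ▸ hyT⟩, minorant_eq_obstacle ⟨hy, hyT⟩,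
        hHl' (mem_Ici.mpr (zero_le_one.trans hy))]
    · rw [hW₀r y (hΨf ▸ hyT), minorant_of_exp_lt hT.le hyT, hB]
  refine ⟨⟨minorant c m T, convexOn_minorant hc.le hm hT.le,
    fun y hy => minorant_nonpos hc.le hm hT.le hy,
    fun y hy => hHl' hy ▸ minorant_le_obstacle hc.le hm hT.le hy,
    fun y hy => (hW y hy).symm⟩, ?_, hB ▸ obstacle_exp_neg hc hm hT⟩
  intro g hg hg0 hgH y hy
  exact hW y hy ▸ le_minorant hT.le hg hg0 (fun z hz => hHl' hz ▸ hgH z hz) hy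

/-- the restriction to [1,∞) of the greatest nonpositive convex minorant of
H_l on [0,∞) equals W₀, and B₀ < 0. -/
theorem stmt_3 (α δ lam : ℝ) (hα : 0 < α) (hδ : 0 < δ) (hlam : 0 < lam)
    (hltd : lam < α * δ)
    (f₀ : ℝ)
    (hf₀ : f₀ = (1 / Real.sqrt (2 * α)) * (Real.sqrt ((α * δ + lam) / (α * δ - lam)) - 1))
    (Ψ : ℝ → ℝ) (hΨ : ∀ x, Ψ x = Real.exp (2 * Real.sqrt (2 * α) * x))
    (Hl : ℝ → ℝ)
    (hHl : ∀ y, 0 < y → Hl y = Real.sqrt y *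
      (-(lam / α ^ 2) + ((δ - lam / α) / (8 * α)) * (Real.log y) ^ 2))
    (hHl0 : Hl 0 = 0)
    (B₀ : ℝ)
    (hB₀ : B₀ = -(2 * f₀ / (α * Real.sqrt (2 * α))) * (α * δ - lam) *
      Real.exp (f₀ * Real.sqrt (2 * α)))
    (W₀ : ℝ → ℝ)
    (hW₀l : ∀ y ∈ Set.Icc 1 (Ψ f₀), W₀ y = Hl y)
    (hW₀r : ∀ y, Ψ f₀ < y → W₀ y = B₀) :
    (∃ w : ℝ → ℝ, ConvexOn ℝ (Set.Ici 0) w ∧ (∀ y ∈ Set.Ici (0 : ℝ), w y ≤ 0) ∧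
      (∀ y ∈ Set.Ici (0 : ℝ), w y ≤ Hl y) ∧ (∀ y ∈ Set.Ici (1 : ℝ), w y = W₀ y)) ∧
    (∀ g : ℝ → ℝ, ConvexOn ℝ (Set.Ici 0) g → (∀ y ∈ Set.Ici (0 : ℝ), g y ≤ 0) →
      (∀ y ∈ Set.Ici (0 : ℝ), g y ≤ Hl y) → ∀ y ∈ Set.Ici (1 : ℝ), g y ≤ W₀ y) ∧
    B₀ < 0 :=
  stmt_3_general α δ lam hα hlam hltd f₀ hf₀ Ψ hΨ Hl hHl hHl0 B₀ hB₀ W₀ hW₀l hW₀r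
end

section
/- The function Ṽ₀ defined by Ṽ₀(x)=δx² for 0≤x≤f₀ and Ṽ₀(x)=λ/α² + (λ/α)x² + B₀e^{−x√(2α)} for x>f₀ is continuously differentiable on (0,∞); in particular the two expressions and their first derivatives agree at x=f₀ (smooth fit at f₀). -/
/-! Since `B₀ e^{-f₀√(2α)} = -(2f₀/(α√(2α)))(αδ-λ)`, the derivative condition at `f₀` becomes
`2δf₀ = 2(λ/α)f₀ + 2f₀(αδ-λ)/α`, an identity, and with `r = √((αδ+λ)/(αδ-λ)) = 1 + f₀√(2α)` the
value condition becomes `(αδ-λ)(r²-1) = 2λ`, which is the definition of `r`. A function glued at a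
point from two `C¹` pieces whose values and derivatives agree there is `C¹`. -/

open Real Set

section Piecewise

variable {g h g' h' : ℝ → ℝ} {c : ℝ}

theorem hasDerivAt_ite_le_s4 (hg : ∀ x, HasDerivAt g (g' x) x) (hh : ∀ x, HasDerivAt h (h' x) x)
    (hval : g c = h c) (hder : g' c = h' c) (x : ℝ) :
    HasDerivAt (fun y ↦ if y ≤ c then g y else h y) (if x ≤ c then g' x else h' x) x := by
  rcases lt_trichotomy x c with hxc | rfl | hxc
  · rw [if_pos hxc.le]
    refine (hg x).congr_of_eventuallyEq ?_
    filter_upwards [Iio_mem_nhds hxc] with y hy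
    exact if_pos (le_of_lt hy)
  · rw [if_pos le_rfl]
    have hleft : HasDerivWithinAt (fun y ↦ if y ≤ x then g y else h y) (g' x) (Iic x) x :=
      (hg x).hasDerivWithinAt.congr (fun y hy ↦ if_pos hy) (if_pos le_rfl)
    have hright : HasDerivWithinAt (fun y ↦ if y ≤ x then g y else h y) (g' x) (Ici x) x := by
      rw [hder]
      refine (hh x).hasDerivWithinAt.congr (fun y hy ↦ ?_) (by rw [if_pos le_rfl, hval])
      rcases (mem_Ici.mp hy).eq_or_lt with rfl | hxy
      · rw [if_pos le_rfl, hval]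
      · exact if_neg (not_le.mpr hxy)
    simpa only [Iic_union_Ici, hasDerivWithinAt_univ] using hleft.union hright
  · rw [if_neg (not_le.mpr hxc)]
    refine (hh x).congr_of_eventuallyEq ?_
    filter_upwards [Ioi_mem_nhds hxc] with y hy
    exact if_neg (not_le.mpr hy)

theorem contDiff_one_ite_le (hg : ∀ x, HasDerivAt g (g' x) x) (hh : ∀ x, HasDerivAt h (h' x) x)
    (hg' : Continuous g') (hh' : Continuous h') (hval : g c = h c) (hder : g' c = h' c) :
    ContDiff ℝ 1 (fun y ↦ if y ≤ c then g y else h y) := by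
  have hd := hasDerivAt_ite_le_s4 hg hh hval hder
  rw [contDiff_one_iff_deriv, funext fun x ↦ (hd x).deriv]
  exact ⟨fun x ↦ (hd x).differentiableAt,
    hg'.if_le hh' continuous_id continuous_const fun x hx ↦ hx ▸ hder⟩

end Piecewise

theorem hasDerivAt_add_mul_sq_add_mul_exp (a b B s x : ℝ) :
    HasDerivAt (fun y ↦ a + b * y ^ 2 + B * exp (-y * s))
      (2 * b * x - s * B * exp (-x * s)) x := by
  have hexp : HasDerivAt (fun y ↦ exp (-y * s)) (exp (-x * s) * (-1 * s)) x :=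
    ((hasDerivAt_neg x).mul_const s).exp
  refine ((((hasDerivAt_pow 2 x).const_mul b).const_add a).add (hexp.const_mul B)).congr_deriv ?_
  push_cast
  ring

section SmoothFit

variable {α δ lam r s f : ℝ}

theorem smooth_fit_value (hα : α ≠ 0) (hs0 : s ≠ 0) (hs : s ^ 2 = 2 * α)
    (hr : (α * δ - lam) * r ^ 2 = α * δ + lam) (hf : f = 1 / s * (r - 1)) :
    δ * f ^ 2 = lam / α ^ 2 + lam / α * f ^ 2 + -(2 * f / (α * s)) * (α * δ - lam) := by
  subst hf
  field_simp
  linear_combination α * hr - lam * hs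

theorem smooth_fit_deriv (hα : α ≠ 0) (hs0 : s ≠ 0) :
    2 * δ * f = 2 * (lam / α) * f - s * (-(2 * f / (α * s)) * (α * δ - lam)) := by
  field_simp
  ring

end SmoothFit

theorem stmt_4_general (α δ lam : ℝ) (hα : 0 < α) (hlam : 0 < lam)
    (hltd : lam < α * δ)
    (f₀ : ℝ)
    (hf₀ : f₀ = (1 / Real.sqrt (2 * α)) * (Real.sqrt ((α * δ + lam) / (α * δ - lam)) - 1))
    (B₀ : ℝ)
    (hB₀ : B₀ = -(2 * f₀ / (α * Real.sqrt (2 * α))) * (α * δ - lam) *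
      Real.exp (f₀ * Real.sqrt (2 * α)))
    (V₀ : ℝ → ℝ)
    (hV₀l : ∀ x, 0 ≤ x → x ≤ f₀ → V₀ x = δ * x ^ 2)
    (hV₀r : ∀ x, f₀ < x → V₀ x = lam / α ^ 2 + (lam / α) * x ^ 2 +
      B₀ * Real.exp (-x * Real.sqrt (2 * α))) :
    ContDiffOn ℝ 1 V₀ (Set.Ioi 0) ∧
    δ * f₀ ^ 2 = lam / α ^ 2 + (lam / α) * f₀ ^ 2 +
      B₀ * Real.exp (-f₀ * Real.sqrt (2 * α)) ∧
    2 * δ * f₀ = 2 * (lam / α) * f₀ -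
      Real.sqrt (2 * α) * B₀ * Real.exp (-f₀ * Real.sqrt (2 * α)) := by
  have hs0 : √(2 * α) ≠ 0 := (sqrt_pos.mpr (by positivity)).ne'
  have hr : (α * δ - lam) * √((α * δ + lam) / (α * δ - lam)) ^ 2 = α * δ + lam := by
    rw [sq_sqrt (div_nonneg (by linarith) (by linarith)), mul_div_cancel₀ _ (by linarith)]
  have hBexp : B₀ * exp (-f₀ * √(2 * α)) = -(2 * f₀ / (α * √(2 * α))) * (α * δ - lam) := by
    rw [hB₀, neg_mul f₀, exp_neg, mul_inv_cancel_right₀ (exp_pos _).ne']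
  have hval := smooth_fit_value hα.ne' hs0 (sq_sqrt (by positivity)) hr hf₀
  have hder := smooth_fit_deriv (δ := δ) (lam := lam) (f := f₀) hα.ne' hs0
  rw [← hBexp] at hval hder
  rw [← mul_assoc] at hder
  refine ⟨?_, hval, hder⟩
  refine (contDiff_one_ite_le (c := f₀)
    (fun x ↦ ((hasDerivAt_pow 2 x).const_mul δ).congr_deriv (by push_cast; ring))
    (fun x ↦ hasDerivAt_add_mul_sq_add_mul_exp _ _ _ _ x)
    (by fun_prop) (by fun_prop) hval hder).contDiffOn.congr fun x hx ↦ ?_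
  split_ifs with hxf
  · exact hV₀l x (le_of_lt hx) hxf
  · exact hV₀r x (not_le.mp hxf)

/-- Ṽ₀ is C¹ on (0,∞); in particular smooth fit holds at f₀. -/
theorem stmt_4 (α δ lam : ℝ) (hα : 0 < α) (hδ : 0 < δ) (hlam : 0 < lam)
    (hltd : lam < α * δ)
    (f₀ : ℝ)
    (hf₀ : f₀ = (1 / Real.sqrt (2 * α)) * (Real.sqrt ((α * δ + lam) / (α * δ - lam)) - 1))
    (B₀ : ℝ)
    (hB₀ : B₀ = -(2 * f₀ / (α * Real.sqrt (2 * α))) * (α * δ - lam) *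
      Real.exp (f₀ * Real.sqrt (2 * α)))
    (V₀ : ℝ → ℝ)
    (hV₀l : ∀ x, 0 ≤ x → x ≤ f₀ → V₀ x = δ * x ^ 2)
    (hV₀r : ∀ x, f₀ < x → V₀ x = lam / α ^ 2 + (lam / α) * x ^ 2 +
      B₀ * Real.exp (-x * Real.sqrt (2 * α))) :
    ContDiffOn ℝ 1 V₀ (Set.Ioi 0) ∧
    δ * f₀ ^ 2 = lam / α ^ 2 + (lam / α) * f₀ ^ 2 +
      B₀ * Real.exp (-f₀ * Real.sqrt (2 * α)) ∧
    2 * δ * f₀ = 2 * (lam / α) * f₀ -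
      Real.sqrt (2 * α) * B₀ * Real.exp (-f₀ * Real.sqrt (2 * α)) :=
  stmt_4_general α δ lam hα hlam hltd f₀ hf₀ B₀ hB₀ V₀ hV₀l hV₀r
end

section
/- Fix c>0 and set x_c = 1/(2δ) + c/2. Then the obstacle h(·;c)=min(h_l(·),h_r(·;c)) satisfies: h(x;c)=h_l(x) for x≤x_c; h(x;c)=h_{r1}(x;c) for x_c≤x≤f₀+c; and h(x;c)=h_{r2}(x;c) for x≥f₀+c. -/
set_option maxHeartbeats 1600000 in
/-- identification of the pieces of the obstacle h(·;c). -/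
theorem stmt_5 (α δ lam : ℝ) (hα : 0 < α) (hδ : 0 < δ) (hlam : 0 < lam)
    (hltd : lam < α * δ)
    (f₀ : ℝ)
    (hf₀ : f₀ = (1 / Real.sqrt (2 * α)) * (Real.sqrt ((α * δ + lam) / (α * δ - lam)) - 1))
    (hf₀big : α / (2 * lam) < f₀)
    (B₀ : ℝ)
    (hB₀ : B₀ = -(2 * f₀ / (α * Real.sqrt (2 * α))) * (α * δ - lam) *
      Real.exp (f₀ * Real.sqrt (2 * α)))
    (c : ℝ) (hc : 0 < c)
    (hl hr1 hr2 hr h : ℝ → ℝ)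
    (hhl : ∀ x, hl x = (δ - lam / α) * x ^ 2 - lam / α ^ 2)
    (hhr1 : ∀ x, hr1 x = δ * c * (c - 2 * x) + (δ - lam / α) * x ^ 2 + c - lam / α ^ 2)
    (hhr2 : ∀ x, hr2 x = (lam / α) * c * (c - 2 * x) + c +
      B₀ * Real.exp (-(x - c) * Real.sqrt (2 * α)))
    (hhra : ∀ x, x ≤ f₀ + c → hr x = hr1 x)
    (hhrb : ∀ x, f₀ + c ≤ x → hr x = hr2 x)
    (hh : ∀ x, h x = min (hl x) (hr x)) :
    (∀ x, x ≤ 1 / (2 * δ) + c / 2 → h x = hl x) ∧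
    (∀ x, 1 / (2 * δ) + c / 2 ≤ x → x ≤ f₀ + c → h x = hr1 x) ∧
    (∀ x, f₀ + c ≤ x → h x = hr2 x) := by
  have hα2 : (0:ℝ) < 2 * α := by linarith
  have hα' : α ≠ 0 := ne_of_gt hα
  set s := Real.sqrt (2 * α) with hsdef
  have hs0 : 0 < s := Real.sqrt_pos.mpr hα2
  have hs' : s ≠ 0 := ne_of_gt hs0
  have hss : s * s = 2 * α := Real.mul_self_sqrt (le_of_lt hα2)
  have hdpos : 0 < α * δ - lam := by linarith
  have hd' : α * δ - lam ≠ 0 := ne_of_gt hdpos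
  have hA : 0 < δ - lam / α := by
    have : lam / α < δ := by rw [div_lt_iff₀ hα]; nlinarith
    linarith
  have hf0pos : 0 < f₀ := lt_trans (by positivity) hf₀big
  have hratio : 0 ≤ (α * δ + lam) / (α * δ - lam) := by positivity
  set r := Real.sqrt ((α * δ + lam) / (α * δ - lam)) with hrdef
  have hrr : r * r = (α * δ + lam) / (α * δ - lam) := Real.mul_self_sqrt hratio
  have hrr' : r * r * (α * δ - lam) = α * δ + lam := by rw [hrr]; field_simp
  have key1 : f₀ * s = r - 1 := by rw [hf₀]; field_simp
  have hI1 : (α * δ - lam) * (f₀ * s) * (f₀ * s) + 2 * (f₀ * s) * (α * δ - lam) = 2 * lam := by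
    rw [key1]; linear_combination hrr'
  -- x_c < f₀ + c
  have hxc : 1 / (2 * δ) + c / 2 < f₀ + c := by
    have h1 : 1 / (2 * δ) < α / (2 * lam) := by
      rw [div_lt_div_iff₀ (by positivity) (by positivity)]; nlinarith
    linarith
  refine ⟨?_, ?_, ?_⟩
  · intro x hx
    have hxf : x ≤ f₀ + c := le_of_lt (lt_of_le_of_lt hx hxc)
    rw [hh x, hhra x hxf]
    apply min_eq_left
    rw [hhl x, hhr1 x]
    have h5 : δ * (1 / (2 * δ) + c / 2) = 1 / 2 + δ * c / 2 := by field_simp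
    have h6 : δ * x ≤ 1 / 2 + δ * c / 2 := by
      calc δ * x ≤ δ * (1 / (2 * δ) + c / 2) := by nlinarith
        _ = 1 / 2 + δ * c / 2 := h5
    nlinarith [mul_nonneg hc.le (by linarith : (0:ℝ) ≤ 1 + δ * c - 2 * (δ * x))]
  · intro x hx1 hx2
    rw [hh x, hhra x hx2]
    apply min_eq_right
    rw [hhl x, hhr1 x]
    have h5 : δ * (1 / (2 * δ) + c / 2) = 1 / 2 + δ * c / 2 := by field_simp
    have h6 : 1 / 2 + δ * c / 2 ≤ δ * x := by
      calc (1:ℝ) / 2 + δ * c / 2 = δ * (1 / (2 * δ) + c / 2) := h5.symm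
        _ ≤ δ * x := by nlinarith
    nlinarith [mul_nonneg hc.le (by linarith : (0:ℝ) ≤ 2 * (δ * x) - 1 - δ * c)]
  · intro x hx
    rw [hh x, hhrb x hx]
    apply min_eq_right
    rw [hhl x, hhr2 x]
    have hKpos : 0 < 2 * f₀ / (α * s) * (α * δ - lam) := by positivity
    have hcomb : Real.exp (f₀ * s) * Real.exp (-(x - c) * s) =
        Real.exp (-(x - c - f₀) * s) := by
      rw [← Real.exp_add]; ring_nf
    have hBe : B₀ * Real.exp (-(x - c) * s) =
        -(2 * f₀ / (α * s)) * (α * δ - lam) * Real.exp (-(x - c - f₀) * s) := by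
      rw [hB₀, mul_assoc, hcomb]
    have hexp_ge : 1 + (-(x - c - f₀) * s) ≤ Real.exp (-(x - c - f₀) * s) := by
      have := Real.add_one_le_exp (-(x - c - f₀) * s); linarith
    have hBle : B₀ * Real.exp (-(x - c) * s) ≤
        -(2 * f₀ / (α * s)) * (α * δ - lam) * (1 + (-(x - c - f₀) * s)) := by
      rw [hBe]
      nlinarith [mul_le_mul_of_nonneg_left hexp_ge hKpos.le]
    have hK : 2 * f₀ / (α * s) * (α * δ - lam) = lam / α ^ 2 - (δ - lam / α) * f₀ ^ 2 := by
      rw [div_mul_eq_mul_div, div_eq_iff (by positivity : α * s ≠ 0)]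
      have e2 : (α * δ - lam) * (f₀ * s) * (f₀ * s) = (α * δ - lam) * f₀ ^ 2 * (2 * α) := by
        calc (α * δ - lam) * (f₀ * s) * (f₀ * s) = (α * δ - lam) * f₀ ^ 2 * (s * s) := by ring
          _ = (α * δ - lam) * f₀ ^ 2 * (2 * α) := by rw [hss]
      have e3 : (lam / α ^ 2 - (δ - lam / α) * f₀ ^ 2) * (2 * α ^ 2) =
          2 * lam - (α * δ - lam) * f₀ ^ 2 * (2 * α) := by field_simp
      have hstep : 2 * f₀ * (α * δ - lam) * s =
          (lam / α ^ 2 - (δ - lam / α) * f₀ ^ 2) * (α * s) * s := by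
        have e1 : (lam / α ^ 2 - (δ - lam / α) * f₀ ^ 2) * (α * s) * s =
            (lam / α ^ 2 - (δ - lam / α) * f₀ ^ 2) * (2 * α ^ 2) := by
          calc (lam / α ^ 2 - (δ - lam / α) * f₀ ^ 2) * (α * s) * s
              = (lam / α ^ 2 - (δ - lam / α) * f₀ ^ 2) * α * (s * s) := by ring
            _ = (lam / α ^ 2 - (δ - lam / α) * f₀ ^ 2) * (2 * α ^ 2) := by rw [hss]; ring
        rw [e1, e3]
        linarith [hI1, e2]
      exact mul_right_cancel₀ hs' hstep
    have hKs : 2 * f₀ / (α * s) * (α * δ - lam) * s = 2 * f₀ * (δ - lam / α) := by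
      field_simp
    have hxgt : 1 / (2 * δ) + c / 2 < x := lt_of_lt_of_le hxc hx
    have h5 : δ * (1 / (2 * δ) + c / 2) = 1 / 2 + δ * c / 2 := by field_simp
    have hbr : (0:ℝ) ≤ 2 * δ * x - δ * c - 1 := by nlinarith
    have expand : -(2 * f₀ / (α * s)) * (α * δ - lam) * (1 + (-(x - c - f₀) * s)) =
        -(2 * f₀ / (α * s) * (α * δ - lam)) +
          (2 * f₀ / (α * s) * (α * δ - lam) * s) * (x - c - f₀) := by ring
    rw [expand, hKs, hK] at hBle
    nlinarith [hBle, mul_nonneg hA.le (sq_nonneg (x - c - f₀)), mul_nonneg hc.le hbr]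
end

section
/- Fix c>0. Then: (i) the function x ↦ δ−(αδ−λ)x²+cα(δ(2x−c)−1) has a unique root x_v(c) in (−∞, f₀+c); (ii) y ↦ H_r(y;c) is continuously differentiable on (0,∞); (iii) setting y_v(c)=max(y_c, Ψ(x_v(c))), one has y_v(c) ∈ [y_c, ŷ₃(c)), H_r(·;c) is strictly convex on (y_v(c),∞), and if y_v(c)>y_c then H_r(·;c) is strictly concave on (y_c, y_v(c)); (iv) H_r(y;c) → −∞ and ∂H_r/∂y(y;c) → 0 as y → ∞. -/
/-!
Substituting `y = Ψ x = exp (2κx)` with `κ = √(2α)` turns `H_r` into `x ↦ exp (κx) h_r(x)`,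
and `∂_y H_r (Ψ x) = q x := exp (-κx) (κ h_r + h_r')(x) / (2κ)`, whose `x`-derivative is
`exp (-κx) (h_r'' - 2α h_r)(x) / (2κ)`. Left of `f₀ + c`, `h_r'' - 2α h_r` is twice the
quadratic of (i); right of it, it is `2c (2λx - λc - α) > 0`. The quadratic opens downwards and
is positive at `f₀ + c` (this is where the equation defining `f₀` and `f₀ > α/(2λ)` enter), so
it has exactly one root `x_v` below `f₀ + c`, and `q` decreases before `x_v` and increases after
it. The constant `B₀` makes `h_r` of class `C¹`, and for `x ≥ f₀ + c` the exponential term of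
`h_r` contributes only a constant to `H_r` and nothing to `q`, which gives the limits.
-/

open Set Filter Real Topology

section Glue

variable {f f₁ f₂ f₁' f₂' : ℝ → ℝ} {a x : ℝ}

lemma continuous_of_eqOn_Iic_Ici (h₁ : EqOn f f₁ (Iic a)) (h₂ : EqOn f f₂ (Ici a))
    (hf₁ : Continuous f₁) (hf₂ : Continuous f₂) : Continuous f := by
  have hf : f = fun x => if x ≤ a then f₁ x else f₂ x := by
    funext x
    split_ifs with hx
    exacts [h₁ hx, h₂ (le_of_not_ge hx)]
  rw [hf]
  exact hf₁.if_le hf₂ continuous_id continuous_const fun x hx =>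
    (h₁ hx.le).symm.trans (h₂ hx.ge)

lemma hasDerivAt_of_eqOn_Iic_Ici_of_le (h₁ : EqOn f f₁ (Iic a)) (h₂ : EqOn f f₂ (Ici a))
    (d₁ : ∀ x, HasDerivAt f₁ (f₁' x) x) (d₂ : ∀ x, HasDerivAt f₂ (f₂' x) x)
    (hd : f₁' a = f₂' a) (hx : x ≤ a) : HasDerivAt f (f₁' x) x := by
  rcases hx.lt_or_eq with hx | rfl
  · exact (d₁ x).congr_of_eventuallyEq <|
      eventually_of_mem (Iio_mem_nhds hx) fun y (hy : y < a) => h₁ hy.le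
  · have hl := (d₁ x).hasDerivWithinAt.congr h₁ (h₁ self_mem_Iic)
    have hr := (d₂ x).hasDerivWithinAt.congr h₂ (h₂ self_mem_Ici)
    rw [← hd] at hr
    simpa only [Iic_union_Ici, hasDerivWithinAt_univ] using hl.union hr

lemma hasDerivAt_of_eqOn_Iic_Ici_of_ge (h₁ : EqOn f f₁ (Iic a)) (h₂ : EqOn f f₂ (Ici a))
    (d₁ : ∀ x, HasDerivAt f₁ (f₁' x) x) (d₂ : ∀ x, HasDerivAt f₂ (f₂' x) x)
    (hd : f₁' a = f₂' a) (hx : a ≤ x) : HasDerivAt f (f₂' x) x := by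
  rcases hx.lt_or_eq with hx | rfl
  · exact (d₂ x).congr_of_eventuallyEq <|
      eventually_of_mem (Ioi_mem_nhds hx) fun y (hy : a < y) => h₂ hy.le
  · exact hd ▸ hasDerivAt_of_eqOn_Iic_Ici_of_le h₁ h₂ d₁ d₂ hd le_rfl

lemma contDiff_one_of_eqOn_Iic_Ici (h₁ : EqOn f f₁ (Iic a)) (h₂ : EqOn f f₂ (Ici a))
    (d₁ : ∀ x, HasDerivAt f₁ (f₁' x) x) (d₂ : ∀ x, HasDerivAt f₂ (f₂' x) x)
    (hc₁ : Continuous f₁') (hc₂ : Continuous f₂') (hd : f₁' a = f₂' a) :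
    ContDiff ℝ 1 f := by
  have D₁ {x} (hx : x ≤ a) := hasDerivAt_of_eqOn_Iic_Ici_of_le h₁ h₂ d₁ d₂ hd hx
  have D₂ {x} (hx : a ≤ x) := hasDerivAt_of_eqOn_Iic_Ici_of_ge h₁ h₂ d₁ d₂ hd hx
  refine contDiff_one_iff_deriv.2 ⟨fun x => ?_, continuous_of_eqOn_Iic_Ici
    (fun x hx => (D₁ hx).deriv) (fun x hx => (D₂ hx).deriv) hc₁ hc₂⟩
  rcases le_total x a with hx | hx
  exacts [(D₁ hx).differentiableAt, (D₂ hx).differentiableAt]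

end Glue

section ExpSubstitution

variable {k : ℝ} {h H : ℝ → ℝ}

/-- For `h' = deriv h`, the derivative of `y ↦ √y * h (log y / (2 * k))` at `y = exp (2kx)`. -/
noncomputable def substDeriv (k : ℝ) (h h' : ℝ → ℝ) (x : ℝ) : ℝ :=
  exp (-(k * x)) * (k * h x + h' x) / (2 * k)

lemma exp_mul_log_div_two_mul (hk : k ≠ 0) {y : ℝ} (hy : 0 < y) :
    exp (k * (log y / (2 * k))) = √y := by
  rw [sqrt_eq_rpow, rpow_def_of_pos hy]
  congr 1
  field_simp

lemma hasDerivAt_sqrt_mul_comp_log (hk : 0 < k)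
    (hH : ∀ y, 0 < y → H y = √y * h (log y / (2 * k))) {y : ℝ} (hy : 0 < y)
    (hh : DifferentiableAt ℝ h (log y / (2 * k))) :
    HasDerivAt H (substDeriv k h (deriv h) (log y / (2 * k))) y := by
  have hL : HasDerivAt (fun y => log y / (2 * k)) (y⁻¹ / (2 * k)) y :=
    (hasDerivAt_log hy.ne').div_const _
  have hprod := (hasDerivAt_sqrt hy.ne').mul (hh.hasDerivAt.comp y hL)
  have hsq : √y ^ 2 = y := sq_sqrt hy.le
  refine (hprod.congr_of_eventuallyEq <|
    eventually_of_mem (Ioi_mem_nhds hy) fun z hz => hH z hz).congr_deriv ?_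
  rw [substDeriv, exp_neg, exp_mul_log_div_two_mul hk.ne' hy]
  simp only [Function.comp]
  field_simp
  rw [hsq]
  ring

lemma contDiffOn_sqrt_mul_comp_log (hH : ∀ y, 0 < y → H y = √y * h (log y / (2 * k)))
    (hh : ContDiff ℝ 1 h) : ContDiffOn ℝ 1 H (Ioi 0) := by
  have hsqrt : ContDiffOn ℝ 1 (√·) (Ioi 0) := fun y hy =>
    (contDiffAt_sqrt (ne_of_gt hy)).contDiffWithinAt
  have hlog : ContDiffOn ℝ 1 (fun y => log y / (2 * k)) (Ioi 0) :=
    (contDiffOn_log.mono fun y hy => ne_of_gt hy).div_const _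
  exact (hsqrt.mul (hh.comp_contDiffOn hlog)).congr fun y hy => hH y hy

lemma continuous_substDeriv (hh : ContDiff ℝ 1 h) : Continuous (substDeriv k h (deriv h)) := by
  have := hh.continuous
  have := (contDiff_one_iff_deriv.1 hh).2
  unfold substDeriv
  fun_prop

lemma hasDerivAt_substDeriv {h' : ℝ → ℝ} {h'' x : ℝ} (hh : HasDerivAt h (h' x) x)
    (hh' : HasDerivAt h' h'' x) :
    HasDerivAt (substDeriv k h h') (exp (-(k * x)) * (h'' - k ^ 2 * h x) / (2 * k)) x := by
  have he : HasDerivAt (fun x => exp (-(k * x))) (exp (-(k * x)) * -k) x :=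
    (((hasDerivAt_id x).const_mul k).neg.congr_deriv (by simp)).exp
  refine ((he.mul ((hh.const_mul k).add hh')).div_const _).congr_deriv ?_
  simp only [Pi.add_apply]
  ring

lemma hasDerivAt_substDeriv_of_eventuallyEq {h₁ h₁' : ℝ → ℝ} {h₁'' x : ℝ}
    (heq : h =ᶠ[𝓝 x] h₁) (hd : ∀ y, HasDerivAt h₁ (h₁' y) y)
    (hd' : HasDerivAt h₁' h₁'' x) :
    HasDerivAt (substDeriv k h (deriv h))
      (exp (-(k * x)) * (h₁'' - k ^ 2 * h₁ x) / (2 * k)) x := by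
  have hderiv : deriv h =ᶠ[𝓝 x] h₁' :=
    heq.deriv.trans (Eventually.of_forall fun y => (hd y).deriv)
  refine (hasDerivAt_substDeriv (hd x) hd').congr_of_eventuallyEq ?_
  filter_upwards [heq, hderiv] with y hy hy'
  simp only [substDeriv, hy, hy']

lemma strictMonoOn_log_div (hk : 0 < k) : StrictMonoOn (fun y => log y / (2 * k)) (Ioi 0) :=
  fun _ hy _ _ hyz => div_lt_div_of_pos_right (log_lt_log hy hyz) (by positivity)

lemma strictConvexOn_of_strictMonoOn_substDeriv (hk : 0 < k)
    (hH : ∀ y, 0 < y → H y = √y * h (log y / (2 * k))) (hh : Differentiable ℝ h) {a : ℝ}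
    (hq : StrictMonoOn (substDeriv k h (deriv h)) (Ioi a)) :
    StrictConvexOn ℝ (Ioi (exp (2 * k * a))) H := by
  have hpos {y} (hy : y ∈ Ioi (exp (2 * k * a))) : 0 < y := (exp_pos _).trans hy
  have hD {y} (hy : y ∈ Ioi (exp (2 * k * a))) :=
    hasDerivAt_sqrt_mul_comp_log hk hH (hpos hy) (hh _)
  refine StrictMonoOn.strictConvexOn_of_deriv (convex_Ioi _)
    (fun y hy => (hD hy).continuousAt.continuousWithinAt) ?_
  rw [interior_Ioi]
  refine (hq.comp ((strictMonoOn_log_div hk).mono fun y hy => hpos hy) fun y hy => ?_).congr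
    fun y hy => (hD hy).deriv.symm
  rw [mem_Ioi, lt_div_iff₀ (by positivity), ← mul_comm, lt_log_iff_exp_lt (hpos hy)]
  exact hy

lemma strictConcaveOn_of_strictAntiOn_substDeriv (hk : 0 < k)
    (hH : ∀ y, 0 < y → H y = √y * h (log y / (2 * k))) (hh : Differentiable ℝ h) {b : ℝ}
    (hq : StrictAntiOn (substDeriv k h (deriv h)) (Iio b)) :
    StrictConcaveOn ℝ (Ioo 0 (exp (2 * k * b))) H := by
  have hD {y} (hy : y ∈ Ioo 0 (exp (2 * k * b))) :=
    hasDerivAt_sqrt_mul_comp_log hk hH hy.1 (hh _)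
  refine StrictAntiOn.strictConcaveOn_of_deriv (convex_Ioo _ _)
    (fun y hy => (hD hy).continuousAt.continuousWithinAt) ?_
  rw [interior_Ioo]
  refine (hq.comp_strictMonoOn ((strictMonoOn_log_div hk).mono fun y hy => hy.1)
    fun y hy => ?_).congr fun y hy => (hD hy).deriv.symm
  rw [mem_Iio, div_lt_iff₀ (by positivity), ← mul_comm, log_lt_iff_lt_exp hy.1]
  exact hy.2

lemma tendsto_atBot_of_sqrt_mul_comp_log (hk : 0 < k)
    (hH : ∀ y, 0 < y → H y = √y * h (log y / (2 * k)))
    (hG : Tendsto (fun x => exp (k * x) * h x) atTop atBot) : Tendsto H atTop atBot := by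
  refine (hG.comp (tendsto_log_atTop.atTop_div_const (by positivity : 0 < 2 * k))).congr' ?_
  filter_upwards [eventually_gt_atTop 0] with y hy
  rw [Function.comp_apply, hH y hy, exp_mul_log_div_two_mul hk.ne' hy]

lemma tendsto_deriv_of_sqrt_mul_comp_log (hk : 0 < k)
    (hH : ∀ y, 0 < y → H y = √y * h (log y / (2 * k))) (hh : Differentiable ℝ h) {l : ℝ}
    (hq : Tendsto (substDeriv k h (deriv h)) atTop (𝓝 l)) : Tendsto (deriv H) atTop (𝓝 l) := by
  refine (hq.comp (tendsto_log_atTop.atTop_div_const (by positivity : 0 < 2 * k))).congr' ?_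
  filter_upwards [eventually_gt_atTop 0] with y hy
  exact (hasDerivAt_sqrt_mul_comp_log hk hH hy (hh _)).deriv.symm

end ExpSubstitution

lemma exists_root_lt_of_neg_leadingCoeff {p : ℝ → ℝ} {a b e t : ℝ}
    (hp : ∀ x, p x = a * x ^ 2 + b * x + e) (ha : a < 0) (ht : 0 < p t) :
    ∃ r < t, p r = 0 ∧ (∀ x < r, p x < 0) ∧ ∀ x ∈ Ioc r t, 0 < p x := by
  simp only [hp] at ht ⊢
  have hdisc : (2 * a * t + b) ^ 2 < b ^ 2 - 4 * a * e := by nlinarith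
  set s := √(b ^ 2 - 4 * a * e)
  have hs2 : s ^ 2 = b ^ 2 - 4 * a * e := sq_sqrt (by nlinarith)
  obtain ⟨hts₁, hts₂⟩ := abs_lt.1 (abs_lt_of_sq_lt_sq (hs2 ▸ hdisc) (sqrt_nonneg _))
  -- `2 * a * x + b` decreases from `s` at the root to above `-s` at `t`
  have hfac (x : ℝ) :
      4 * a * (a * x ^ 2 + b * x + e) = (2 * a * x + b - s) * (2 * a * x + b + s) := by
    linear_combination hs2
  refine ⟨(s - b) / (2 * a), ?_, ?_, fun x hx => ?_, fun x hx => ?_⟩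
  · rw [div_lt_iff_of_neg (by linarith)]; linarith
  · have hr : 2 * a * ((s - b) / (2 * a)) + b = s := by field_simp [ha.ne]; ring
    have := hfac ((s - b) / (2 * a))
    rw [hr, sub_self, zero_mul] at this
    exact (mul_eq_zero.1 this).resolve_left (by linarith)
  · rw [lt_div_iff_of_neg (by linarith)] at hx
    nlinarith [hfac x]
  · obtain ⟨hx₁, hx₂⟩ := hx
    rw [div_lt_iff_of_neg (by linarith)] at hx₁
    have : -s < 2 * a * x + b := by nlinarith
    nlinarith [hfac x]

lemma hasDerivAt_exp_neg_sub_mul (c k x : ℝ) :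
    HasDerivAt (fun x => exp (-(x - c) * k)) (-k * exp (-(x - c) * k)) x :=
  (((hasDerivAt_id' x).sub_const c).neg.mul_const k).exp.congr_deriv
    (by simp only [Pi.neg_apply]; ring)

lemma tendsto_exp_mul_affine_atBot {k A B : ℝ} (hk : 0 < k) (hB : B < 0) :
    Tendsto (fun x => exp (k * x) * (A + B * x)) atTop atBot :=
  ((tendsto_exp_atTop.comp (tendsto_id.const_mul_atTop hk)).atTop_mul_atBot₀
    (tendsto_atBot_add_const_left _ A (tendsto_id.const_mul_atTop_of_neg hB)))

lemma tendsto_exp_neg_mul_affine_nhds_zero {k A B : ℝ} (hk : 0 < k) :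
    Tendsto (fun x => exp (-(k * x)) * (A + B * x)) atTop (𝓝 0) := by
  have h₀ : Tendsto (fun x => exp (-(k * x))) atTop (𝓝 0) :=
    tendsto_exp_neg_atTop_nhds_zero.comp (tendsto_id.const_mul_atTop hk)
  have h₁ := tendsto_rpow_mul_exp_neg_mul_atTop_nhds_zero 1 k hk
  simpa using ((h₀.const_mul A).add (h₁.const_mul B)).congr fun x => by simp; ring

section Obstacle

variable {α δ lam c B₀ f₀ a x : ℝ} {hr : ℝ → ℝ}

-- The branches `h_{r1}(·;c)` and `h_{r2}(·;c)` of `h_r(·;c)`.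
noncomputable def hrLeft (α δ lam c x : ℝ) : ℝ :=
  δ * c * (c - 2 * x) + (δ - lam / α) * x ^ 2 + c - lam / α ^ 2

noncomputable def hrRight (α lam B₀ c x : ℝ) : ℝ :=
  (lam / α) * c * (c - 2 * x) + c + B₀ * exp (-(x - c) * √(2 * α))

/-- Half of `h_{r1}'' - 2α h_{r1}`, which decides the convexity of `H_r` left of `f₀ + c`. -/
def inflectionQuad (α δ lam c x : ℝ) : ℝ :=
  δ - (α * δ - lam) * x ^ 2 + c * α * (δ * (2 * x - c) - 1)

lemma hasDerivAt_hrLeft (x : ℝ) :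
    HasDerivAt (hrLeft α δ lam c) (2 * (δ - lam / α) * x - 2 * δ * c) x :=
  (((((hasDerivAt_id' x).const_mul 2).const_sub c).const_mul (δ * c)).add
    ((hasDerivAt_pow 2 x).const_mul (δ - lam / α)) |>.add_const c |>.sub_const (lam / α ^ 2)
    |>.congr_deriv (by ring))

lemma hasDerivAt_hrRight (x : ℝ) :
    HasDerivAt (hrRight α lam B₀ c)
      (-(2 * (lam / α) * c) - √(2 * α) * B₀ * exp (-(x - c) * √(2 * α))) x :=
  ((((hasDerivAt_id' x).const_mul 2).const_sub c).const_mul (lam / α * c) |>.add_const c).add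
    ((hasDerivAt_exp_neg_sub_mul c √(2 * α) x).const_mul B₀) |>.congr_deriv (by ring)

lemma hasDerivAt_substDeriv_hr_of_lt (hα : 0 < α)
    (hleft : EqOn hr (hrLeft α δ lam c) (Iic a)) (hx : x < a) :
    HasDerivAt (substDeriv √(2 * α) hr (deriv hr))
      (exp (-(√(2 * α) * x)) * inflectionQuad α δ lam c x / √(2 * α)) x := by
  have hd' : HasDerivAt (fun x => 2 * (δ - lam / α) * x - 2 * δ * c) (2 * (δ - lam / α)) x :=
    ((hasDerivAt_id' x).const_mul _).sub_const _ |>.congr_deriv (mul_one _)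
  convert hasDerivAt_substDeriv_of_eventuallyEq (eventually_of_mem (Iio_mem_nhds hx)
    fun y (hy : y < a) => hleft hy.le) hasDerivAt_hrLeft hd' using 1
  rw [sq_sqrt (by positivity), hrLeft, inflectionQuad]
  field_simp
  ring

lemma hasDerivAt_substDeriv_hr_of_gt (hα : 0 < α)
    (hright : EqOn hr (hrRight α lam B₀ c) (Ici a)) (hx : a < x) :
    HasDerivAt (substDeriv √(2 * α) hr (deriv hr))
      (exp (-(√(2 * α) * x)) * (c * (2 * lam * x - lam * c - α)) / √(2 * α)) x := by
  have hd' : HasDerivAt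
      (fun x => -(2 * (lam / α) * c) - √(2 * α) * B₀ * exp (-(x - c) * √(2 * α)))
      (2 * α * (B₀ * exp (-(x - c) * √(2 * α)))) x := by
    refine ((hasDerivAt_exp_neg_sub_mul c √(2 * α) x).const_mul _).const_sub _
      |>.congr_deriv ?_
    linear_combination (B₀ * exp (-(x - c) * √(2 * α))) * sq_sqrt (by positivity : 0 ≤ 2 * α)
  convert hasDerivAt_substDeriv_of_eventuallyEq (eventually_of_mem (Ioi_mem_nhds hx)
    fun y (hy : a < y) => hright hy.le) hasDerivAt_hrRight hd' using 1
  rw [sq_sqrt (by positivity), hrRight]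
  field_simp
  ring

lemma f₀_quadratic_eq (hα : 0 < α) (hlam : 0 < lam) (hltd : lam < α * δ)
    (hf₀ : f₀ = (1 / √(2 * α)) * (√((α * δ + lam) / (α * δ - lam)) - 1)) :
    α * (α * δ - lam) * f₀ ^ 2 + (α * δ - lam) * √(2 * α) * f₀ = lam := by
  have hk : 0 < √(2 * α) := sqrt_pos.2 (by positivity)
  have hd : 0 < α * δ - lam := by linarith
  have hsq : (√(2 * α) * f₀ + 1) ^ 2 = (α * δ + lam) / (α * δ - lam) := by
    rw [hf₀, ← mul_assoc, mul_one_div_cancel hk.ne', one_mul, sub_add_cancel,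
      sq_sqrt (div_nonneg (by linarith) hd.le)]
  field_simp at hsq
  linear_combination
    hsq / 2 - (α * δ - lam) * f₀ ^ 2 / 2 * sq_sqrt (by positivity : 0 ≤ 2 * α)

lemma inflectionQuad_f₀_add_pos (hα : 0 < α) (hlam : 0 < lam) (hc : 0 < c)
    (hltd : lam < α * δ)
    (hf₀ : f₀ = (1 / √(2 * α)) * (√((α * δ + lam) / (α * δ - lam)) - 1))
    (hf₀big : α / (2 * lam) < f₀) : 0 < inflectionQuad α δ lam c (f₀ + c) := by
  have hf₀pos : 0 < f₀ := (by positivity : 0 < α / (2 * lam)).trans hf₀big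
  have h2lf : 0 < 2 * lam * f₀ - α := by
    have := (div_lt_iff₀ (by positivity)).1 hf₀big; linarith
  have key : α * inflectionQuad α δ lam c (f₀ + c) =
      (α * δ - lam) * (1 + √(2 * α) * f₀) + α * c * (2 * lam * f₀ - α) + α * lam * c ^ 2 := by
    unfold inflectionQuad
    linear_combination -f₀_quadratic_eq hα hlam hltd hf₀
  refine pos_of_mul_pos_right (key ▸ add_pos (add_pos (mul_pos ?_ ?_) ?_) ?_) hα.le
  all_goals first | linarith | positivity

lemma exists_inflectionQuad_root (hα : 0 < α) (hlam : 0 < lam) (hc : 0 < c)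
    (hltd : lam < α * δ)
    (hf₀ : f₀ = (1 / √(2 * α)) * (√((α * δ + lam) / (α * δ - lam)) - 1))
    (hf₀big : α / (2 * lam) < f₀) :
    ∃ xv < f₀ + c, inflectionQuad α δ lam c xv = 0 ∧
      (∀ x < xv, inflectionQuad α δ lam c x < 0) ∧
      ∀ x ∈ Ioc xv (f₀ + c), 0 < inflectionQuad α δ lam c x :=
  exists_root_lt_of_neg_leadingCoeff (a := -(α * δ - lam)) (b := 2 * c * α * δ)
    (e := δ - c * α * (δ * c + 1))
    (fun x => by unfold inflectionQuad; ring) (by linarith)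
    (inflectionQuad_f₀_add_pos hα hlam hc hltd hf₀ hf₀big)

lemma deriv_hrLeft_eq_deriv_hrRight (hα : 0 < α)
    (hB₀ : B₀ = -(2 * f₀ / (α * √(2 * α))) * (α * δ - lam) * exp (f₀ * √(2 * α))) :
    2 * (δ - lam / α) * (f₀ + c) - 2 * δ * c =
      -(2 * (lam / α) * c) - √(2 * α) * B₀ * exp (-(f₀ + c - c) * √(2 * α)) := by
  rw [show -(f₀ + c - c) * √(2 * α) = -(f₀ * √(2 * α)) by ring, exp_neg, hB₀]
  field_simp
  ring

lemma one_div_two_mul_add_half_lt (hα : 0 < α) (hlam : 0 < lam) (hc : 0 < c)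
    (hltd : lam < α * δ) (hf₀big : α / (2 * lam) < f₀) : 1 / (2 * δ) + c / 2 < f₀ + c := by
  have hδ : 0 < δ := pos_of_mul_pos_right (hlam.trans hltd) hα.le
  have : 1 / (2 * δ) < α / (2 * lam) := by
    rw [div_lt_div_iff₀ (by positivity) (by positivity)]; linarith
  linarith

lemma strictMonoOn_substDeriv_hr (hα : 0 < α) (hlam : 0 < lam) (hc : 0 < c)
    (hf₀big : α / (2 * lam) < f₀) (hC1 : ContDiff ℝ 1 hr)
    (hleft : EqOn hr (hrLeft α δ lam c) (Iic (f₀ + c)))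
    (hright : EqOn hr (hrRight α lam B₀ c) (Ici (f₀ + c))) {xv : ℝ} (hxv : xv < f₀ + c)
    (hpos : ∀ x ∈ Ioc xv (f₀ + c), 0 < inflectionQuad α δ lam c x) :
    StrictMonoOn (substDeriv √(2 * α) hr (deriv hr)) (Ioi xv) := by
  have hk : 0 < √(2 * α) := sqrt_pos.2 (by positivity)
  have h2lf : α < 2 * lam * f₀ := by
    have := (div_lt_iff₀ (by positivity)).1 hf₀big; linarith
  rw [← Ioc_union_Ici_eq_Ioi hxv]
  refine StrictMonoOn.union ?_ ?_ ⟨right_mem_Ioc.2 hxv, fun _ hx => hx.2⟩ isLeast_Ici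
  · refine strictMonoOn_of_deriv_pos (convex_Ioc _ _) (continuous_substDeriv hC1).continuousOn
      fun x hx => ?_
    rw [interior_Ioc] at hx
    rw [(hasDerivAt_substDeriv_hr_of_lt hα hleft hx.2).deriv]
    exact div_pos (mul_pos (exp_pos _) (hpos x (Ioo_subset_Ioc_self hx))) hk
  · refine strictMonoOn_of_deriv_pos (convex_Ici _) (continuous_substDeriv hC1).continuousOn
      fun x hx => ?_
    rw [interior_Ici] at hx
    rw [(hasDerivAt_substDeriv_hr_of_gt hα hright hx).deriv]
    have : lam * (f₀ + c) < lam * x := mul_lt_mul_of_pos_left hx hlam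
    exact div_pos (mul_pos (exp_pos _) (mul_pos hc (by nlinarith [mul_pos hlam hc]))) hk

lemma strictAntiOn_substDeriv_hr (hα : 0 < α) (hC1 : ContDiff ℝ 1 hr)
    (hleft : EqOn hr (hrLeft α δ lam c) (Iic a)) {xv : ℝ} (hxv : xv < a)
    (hneg : ∀ x < xv, inflectionQuad α δ lam c x < 0) :
    StrictAntiOn (substDeriv √(2 * α) hr (deriv hr)) (Iio xv) :=
  strictAntiOn_of_deriv_neg (convex_Iio _) (continuous_substDeriv hC1).continuousOn fun x hx => by
    rw [interior_Iio] at hx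
    rw [(hasDerivAt_substDeriv_hr_of_lt hα hleft (hx.trans hxv)).deriv]
    exact div_neg_of_neg_of_pos (mul_neg_of_pos_of_neg (exp_pos _) (hneg x hx))
      (sqrt_pos.2 (by positivity))

lemma tendsto_exp_mul_hr_atBot (hα : 0 < α) (hlam : 0 < lam) (hc : 0 < c)
    (hright : EqOn hr (hrRight α lam B₀ c) (Ici a)) :
    Tendsto (fun x => exp (√(2 * α) * x) * hr x) atTop atBot := by
  have hk : 0 < √(2 * α) := sqrt_pos.2 (by positivity)
  refine (tendsto_atBot_add_const_right _ (B₀ * exp (c * √(2 * α)))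
    (tendsto_exp_mul_affine_atBot (A := lam / α * c * c + c) hk
      (neg_lt_zero.2 (by positivity : 0 < 2 * (lam / α) * c)))).congr' ?_
  filter_upwards [eventually_ge_atTop a] with x hx
  have hexp : exp (√(2 * α) * x) * exp (-(x - c) * √(2 * α)) = exp (c * √(2 * α)) := by
    rw [← exp_add]; ring_nf
  rw [hright hx, hrRight]
  linear_combination (-B₀) * hexp

lemma tendsto_substDeriv_hr (hα : 0 < α) (hright : EqOn hr (hrRight α lam B₀ c) (Ici a)) :
    Tendsto (substDeriv √(2 * α) hr (deriv hr)) atTop (𝓝 0) := by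
  have hk : 0 < √(2 * α) := sqrt_pos.2 (by positivity)
  have := (tendsto_exp_neg_mul_affine_nhds_zero hk (A := √(2 * α) * (lam / α * c * c + c) -
    2 * (lam / α) * c) (B := -(2 * √(2 * α) * (lam / α) * c))).div_const (2 * √(2 * α))
  rw [zero_div] at this
  refine this.congr' ?_
  filter_upwards [eventually_gt_atTop a] with x hx
  have hd := ((hasDerivAt_hrRight x).congr_of_eventuallyEq <|
    eventually_of_mem (Ioi_mem_nhds hx) fun y (hy : a < y) => hright hy.le).deriv
  rw [substDeriv, hright hx.le, hd, hrRight]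
  ring

end Obstacle

theorem stmt_6_general (α δ lam : ℝ) (hα : 0 < α) (hlam : 0 < lam)
    (hltd : lam < α * δ)
    (f₀ : ℝ)
    (hf₀ : f₀ = (1 / Real.sqrt (2 * α)) * (Real.sqrt ((α * δ + lam) / (α * δ - lam)) - 1))
    (hf₀big : α / (2 * lam) < f₀)
    (Ψ : ℝ → ℝ) (hΨ : ∀ x, Ψ x = Real.exp (2 * Real.sqrt (2 * α) * x))
    (B₀ : ℝ)
    (hB₀ : B₀ = -(2 * f₀ / (α * Real.sqrt (2 * α))) * (α * δ - lam) *
      Real.exp (f₀ * Real.sqrt (2 * α)))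
    (c : ℝ) (hc : 0 < c)
    (hr1 hr2 hr : ℝ → ℝ)
    (hhr1 : ∀ x, hr1 x = δ * c * (c - 2 * x) + (δ - lam / α) * x ^ 2 + c - lam / α ^ 2)
    (hhr2 : ∀ x, hr2 x = (lam / α) * c * (c - 2 * x) + c +
      B₀ * Real.exp (-(x - c) * Real.sqrt (2 * α)))
    (hhra : ∀ x, x ≤ f₀ + c → hr x = hr1 x)
    (hhrb : ∀ x, f₀ + c ≤ x → hr x = hr2 x)
    (Hr : ℝ → ℝ)
    (hHr : ∀ y, 0 < y → Hr y = Real.sqrt y * hr (Real.log y / (2 * Real.sqrt (2 * α)))) :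
    -- (i) unique root x_v(c) in (−∞, f₀+c)
    (∃! xv : ℝ, xv < f₀ + c ∧
      δ - (α * δ - lam) * xv ^ 2 + c * α * (δ * (2 * xv - c) - 1) = 0) ∧
    -- (ii) H_r(·;c) is continuously differentiable on (0,∞)
    ContDiffOn ℝ 1 Hr (Set.Ioi 0) ∧
    -- (iii) convexity/concavity split at y_v(c) = max(y_c, Ψ(x_v(c)))
    (∀ xv : ℝ, xv < f₀ + c →
      δ - (α * δ - lam) * xv ^ 2 + c * α * (δ * (2 * xv - c) - 1) = 0 →
      Ψ (1 / (2 * δ) + c / 2) ≤ max (Ψ (1 / (2 * δ) + c / 2)) (Ψ xv) ∧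
      max (Ψ (1 / (2 * δ) + c / 2)) (Ψ xv) < Ψ (f₀ + c) ∧
      StrictConvexOn ℝ (Set.Ioi (max (Ψ (1 / (2 * δ) + c / 2)) (Ψ xv))) Hr ∧
      (Ψ (1 / (2 * δ) + c / 2) < max (Ψ (1 / (2 * δ) + c / 2)) (Ψ xv) →
        StrictConcaveOn ℝ
          (Set.Ioo (Ψ (1 / (2 * δ) + c / 2)) (max (Ψ (1 / (2 * δ) + c / 2)) (Ψ xv))) Hr)) ∧
    -- (iv) limits at infinity
    Filter.Tendsto Hr Filter.atTop Filter.atBot ∧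
    Filter.Tendsto (deriv Hr) Filter.atTop (nhds 0) := by
  have hk : 0 < √(2 * α) := sqrt_pos.2 (by positivity)
  have hleft : EqOn hr (hrLeft α δ lam c) (Iic (f₀ + c)) :=
    fun x hx => (hhra x hx).trans (hhr1 x)
  have hright : EqOn hr (hrRight α lam B₀ c) (Ici (f₀ + c)) :=
    fun x hx => (hhrb x hx).trans (hhr2 x)
  have hC1 : ContDiff ℝ 1 hr := contDiff_one_of_eqOn_Iic_Ici hleft hright hasDerivAt_hrLeft
    hasDerivAt_hrRight (by fun_prop) (by fun_prop) (deriv_hrLeft_eq_deriv_hrRight hα hB₀)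
  have hdiff := hC1.differentiable one_ne_zero
  obtain ⟨xv, hxv, hroot, hneg, hpos⟩ := exists_inflectionQuad_root hα hlam hc hltd hf₀ hf₀big
  have huniq (x : ℝ) (hx : x < f₀ + c) (hx0 : inflectionQuad α δ lam c x = 0) : x = xv := by
    rcases lt_trichotomy x xv with h | h | h
    exacts [absurd hx0 (hneg x h).ne, h, absurd hx0 (hpos x ⟨h, hx.le⟩).ne']
  have hconv := strictConvexOn_of_strictMonoOn_substDeriv hk hHr hdiff
    (strictMonoOn_substDeriv_hr hα hlam hc hf₀big hC1 hleft hright hxv hpos)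
  have hconc := strictConcaveOn_of_strictAntiOn_substDeriv hk hHr hdiff
    (strictAntiOn_substDeriv_hr hα hC1 hleft hxv hneg)
  have hΨ_mono : StrictMono Ψ := fun x y hxy => by
    simpa only [hΨ, exp_lt_exp] using mul_lt_mul_of_pos_left hxy (by positivity)
  refine ⟨⟨xv, ⟨hxv, hroot⟩, fun x hx => huniq x hx.1 hx.2⟩,
    contDiffOn_sqrt_mul_comp_log hHr hC1, fun x hx hx0 => ?_,
    tendsto_atBot_of_sqrt_mul_comp_log hk hHr (tendsto_exp_mul_hr_atBot hα hlam hc hright),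
    tendsto_deriv_of_sqrt_mul_comp_log hk hHr hdiff (tendsto_substDeriv_hr hα hright)⟩
  obtain rfl := huniq x hx hx0
  refine ⟨le_max_left _ _,
    max_lt (hΨ_mono (one_div_two_mul_add_half_lt hα hlam hc hltd hf₀big)) (hΨ_mono hx),
    hconv.subset (fun y (hy : _ < y) => hΨ x ▸ ((le_max_right _ _).trans_lt hy : Ψ x < y))
      (convex_Ioi _),
    fun _ => hconc.subset (fun y hy => ⟨(hΨ _ ▸ exp_pos _).trans hy.1,
      hΨ x ▸ (lt_max_iff.1 hy.2).resolve_left hy.1.not_gt⟩) (convex_Ioo _ _)⟩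

/-- geometry of the transformed obstacle H_r(·;c) for fixed c > 0. -/
theorem stmt_6 (α δ lam : ℝ) (hα : 0 < α) (hδ : 0 < δ) (hlam : 0 < lam)
    (hltd : lam < α * δ)
    (f₀ : ℝ)
    (hf₀ : f₀ = (1 / Real.sqrt (2 * α)) * (Real.sqrt ((α * δ + lam) / (α * δ - lam)) - 1))
    (hf₀big : α / (2 * lam) < f₀)
    (Ψ : ℝ → ℝ) (hΨ : ∀ x, Ψ x = Real.exp (2 * Real.sqrt (2 * α) * x))
    (B₀ : ℝ)
    (hB₀ : B₀ = -(2 * f₀ / (α * Real.sqrt (2 * α))) * (α * δ - lam) *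
      Real.exp (f₀ * Real.sqrt (2 * α)))
    (c : ℝ) (hc : 0 < c)
    (hr1 hr2 hr : ℝ → ℝ)
    (hhr1 : ∀ x, hr1 x = δ * c * (c - 2 * x) + (δ - lam / α) * x ^ 2 + c - lam / α ^ 2)
    (hhr2 : ∀ x, hr2 x = (lam / α) * c * (c - 2 * x) + c +
      B₀ * Real.exp (-(x - c) * Real.sqrt (2 * α)))
    (hhra : ∀ x, x ≤ f₀ + c → hr x = hr1 x)
    (hhrb : ∀ x, f₀ + c ≤ x → hr x = hr2 x)
    (Hr : ℝ → ℝ)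
    (hHr : ∀ y, 0 < y → Hr y = Real.sqrt y * hr (Real.log y / (2 * Real.sqrt (2 * α)))) :
    -- (i) unique root x_v(c) in (−∞, f₀+c)
    (∃! xv : ℝ, xv < f₀ + c ∧
      δ - (α * δ - lam) * xv ^ 2 + c * α * (δ * (2 * xv - c) - 1) = 0) ∧
    -- (ii) H_r(·;c) is continuously differentiable on (0,∞)
    ContDiffOn ℝ 1 Hr (Set.Ioi 0) ∧
    -- (iii) convexity/concavity split at y_v(c) = max(y_c, Ψ(x_v(c)))
    (∀ xv : ℝ, xv < f₀ + c →
      δ - (α * δ - lam) * xv ^ 2 + c * α * (δ * (2 * xv - c) - 1) = 0 →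
      Ψ (1 / (2 * δ) + c / 2) ≤ max (Ψ (1 / (2 * δ) + c / 2)) (Ψ xv) ∧
      max (Ψ (1 / (2 * δ) + c / 2)) (Ψ xv) < Ψ (f₀ + c) ∧
      StrictConvexOn ℝ (Set.Ioi (max (Ψ (1 / (2 * δ) + c / 2)) (Ψ xv))) Hr ∧
      (Ψ (1 / (2 * δ) + c / 2) < max (Ψ (1 / (2 * δ) + c / 2)) (Ψ xv) →
        StrictConcaveOn ℝ
          (Set.Ioo (Ψ (1 / (2 * δ) + c / 2)) (max (Ψ (1 / (2 * δ) + c / 2)) (Ψ xv))) Hr)) ∧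
    -- (iv) limits at infinity
    Filter.Tendsto Hr Filter.atTop Filter.atBot ∧
    Filter.Tendsto (deriv Hr) Filter.atTop (nhds 0) :=
  stmt_6_general α δ lam hα hlam hltd f₀ hf₀ hf₀big Ψ hΨ B₀ hB₀ c hc hr1 hr2 hr hhr1 hhr2 hhra hhrb
    Hr hHr
end

section
/- Let 1 < y_u < y_w ≤ Ψ(f₀). Then there exists c̄>0 such that for all c ∈ (0,c̄) and all y ≥ y_w, the tangent line to H_l at y_u lies strictly below H_r(·;c): H_l(y_u) + H_l'(y_u)·(y−y_u) < H_r(y;c). -/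
/-!
Substitute `y = exp (2 √(2α) x)`, so that `√y = exp (√(2α) x)` and `H_l y = √y (a + b (log y)²)`
with `b > 0`. The constant `f₀` makes `Ψ f₀` the critical point of `H_l`: on `[1, Ψ f₀]` it is
strictly convex and decreasing, and on `[Ψ f₀, ∞)` it increases from `B₀ = H_l (Ψ f₀) ≤ 0`. So the
tangent at `y_u` has negative slope and stays some `ε > 0` below `H_l` on the compact `[y_w, Ψ f₀]`.
Since `x √y ≤ y / √(2α)`, the first branch of `H_r(·; c)` is at least `H_l y - (2δ/√(2α)) c y`, and
beyond `Ψ f₀` both branches are at least `B₀ e^{√(2α) c} - (2δ/√(2α)) c y`. For small `c` this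
perturbation is absorbed by `ε` on `[y_w, Ψ f₀]` and by the falling tangent beyond `Ψ f₀`.
-/

open Real Set Filter Topology

theorem sqrt_eq_exp_log_div_two {y : ℝ} (hy : 0 < y) : √y = exp (log y / 2) := by
  rw [exp_half, exp_log hy]

theorem log_mul_sqrt_le {y : ℝ} (hy : 0 < y) : log y * √y ≤ 2 * y := by
  have hlog : log y ≤ 2 * √y := by
    have := log_le_self (sqrt_nonneg y)
    rw [log_sqrt hy.le] at this
    linarith
  calc log y * √y ≤ 2 * √y * √y := mul_le_mul_of_nonneg_right hlog (sqrt_nonneg y)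
    _ = 2 * y := by rw [mul_assoc, mul_self_sqrt hy.le]

theorem StrictConvexOn.add_mul_sub_lt_of_hasDerivAt {S : Set ℝ} {f : ℝ → ℝ} {x y f' : ℝ}
    (hfc : StrictConvexOn ℝ S f) (hx : x ∈ S) (hy : y ∈ S) (hxy : x < y)
    (hf : HasDerivAt f f' x) : f x + f' * (y - x) < f y := by
  have h := hfc.lt_slope_of_hasDerivAt hx hy hxy hf
  rw [slope_def_field, lt_div_iff₀ (sub_pos.2 hxy)] at h
  linarith

theorem IsCompact.exists_pos_add_le {X : Type*} [TopologicalSpace X] {K : Set X}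
    (hK : IsCompact K) {f g : X → ℝ} (hf : ContinuousOn f K) (hg : ContinuousOn g K)
    (hfg : ∀ x ∈ K, f x < g x) : ∃ ε > 0, ∀ x ∈ K, f x + ε ≤ g x := by
  rcases K.eq_empty_or_nonempty with rfl | hne
  · exact ⟨1, one_pos, by simp⟩
  obtain ⟨x₀, hx₀, hmin⟩ := hK.exists_isMinOn hne (hg.sub hf)
  refine ⟨g x₀ - f x₀, sub_pos.2 (hfg x₀ hx₀), fun x hx => ?_⟩
  have : g x₀ - f x₀ ≤ g x - f x := isMinOn_iff.1 hmin x hx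
  linarith

theorem exists_pos_forall_affine_lt {F β : ℝ → ℝ} {G : ℝ → ℝ → ℝ} {u m p q ε κ : ℝ}
    (hm : m < 0) (hκ : 0 ≤ κ) (hpq : p ≤ q) (hε : 0 < ε)
    (hgap : ∀ y ∈ Icc p q, F u + m * (y - u) + ε ≤ F y)
    (hβ : ContinuousAt β 0) (hβ0 : β 0 = F q)
    (hG_le : ∀ c > 0, ∀ y ∈ Icc p q, F y - κ * c * y ≤ G c y)
    (hG_ge : ∀ c > 0, ∀ y, q ≤ y → β c - κ * c * y ≤ G c y) :
    ∃ cbar > 0, ∀ c, 0 < c → c < cbar → ∀ y, p ≤ y → F u + m * (y - u) < G c y := by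
  have hsmall : ∀ᶠ c in 𝓝 (0 : ℝ), κ * c < -m ∧ κ * c * q < ε ∧ F q - ε + κ * c * q < β c := by
    refine (ContinuousAt.eventually_lt (by fun_prop) (by fun_prop) ?_).and
      ((ContinuousAt.eventually_lt (by fun_prop) (by fun_prop) ?_).and
        (ContinuousAt.eventually_lt (by fun_prop) hβ ?_)) <;> simp [hβ0, hm, hε]
  obtain ⟨cbar, hcbar, hsub⟩ := mem_nhdsGT_iff_exists_Ioo_subset.1 (nhdsWithin_le_nhds hsmall)
  refine ⟨cbar, hcbar, fun c hc hcb y hy => ?_⟩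
  obtain ⟨hslope, hκq, hβc⟩ := hsub ⟨hc, hcb⟩
  rcases le_total y q with hyq | hqy
  · have := hgap y ⟨hy, hyq⟩
    have := hG_le c hc y ⟨hy, hyq⟩
    have := mul_le_mul_of_nonneg_left hyq (mul_nonneg hκ hc.le)
    linarith
  · -- beyond `q` the line falls at least as fast as the error `κ c y` grows
    have := hgap q ⟨hpq, le_rfl⟩
    have := hG_ge c hc y hqy
    have := mul_nonpos_of_nonpos_of_nonneg (by linarith : m + κ * c ≤ 0) (sub_nonneg.2 hqy)
    linarith

noncomputable def sqrtQuadLog (a b y : ℝ) : ℝ := √y * (a + b * log y ^ 2)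

noncomputable def sqrtQuadLogDeriv (a b y : ℝ) : ℝ :=
  (a + b * log y ^ 2 + 4 * b * log y) / (2 * √y)

section SqrtQuadLog

variable {a b y T : ℝ}

theorem hasDerivAt_sqrtQuadLog (hy : 0 < y) :
    HasDerivAt (sqrtQuadLog a b) (sqrtQuadLogDeriv a b y) y := by
  refine ((hasDerivAt_sqrt hy.ne').mul
    ((((hasDerivAt_log hy.ne').pow 2).const_mul b).const_add a)).congr_deriv ?_
  have : 0 < √y := sqrt_pos.2 hy
  simp only [sqrtQuadLogDeriv, Pi.pow_apply]
  field_simp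
  rw [sq_sqrt hy.le]
  ring

theorem hasDerivAt_sqrtQuadLogDeriv (hy : 0 < y) :
    HasDerivAt (sqrtQuadLogDeriv a b) ((8 * b - a - b * log y ^ 2) / (4 * y * √y)) y := by
  have hlog := hasDerivAt_log hy.ne'
  have : 0 < √y := sqrt_pos.2 hy
  refine ((((hlog.pow 2).const_mul b).const_add a).add (hlog.const_mul (4 * b))).div
    ((hasDerivAt_sqrt hy.ne').const_mul 2) (by positivity) |>.congr_deriv ?_
  simp only [Pi.add_apply, Pi.pow_apply]
  field_simp
  rw [sq_sqrt hy.le]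
  ring

theorem continuousOn_sqrtQuadLog : ContinuousOn (sqrtQuadLog a b) (Ioi 0) :=
  fun _ hy => (hasDerivAt_sqrtQuadLog hy).continuousAt.continuousWithinAt

theorem sqrtQuadLog_exp (T : ℝ) : sqrtQuadLog a b (exp T) = exp (T / 2) * (a + b * T ^ 2) := by
  rw [sqrtQuadLog, sqrt_eq_exp_log_div_two (exp_pos T), log_exp]

/- `hcrit` says that the numerator of `sqrtQuadLogDeriv a b` vanishes at `log y = T`, i.e. that
`exp T` is a critical point of `sqrtQuadLog a b`. -/
variable (hb : 0 < b) (hcrit : a + b * T ^ 2 + 4 * b * T = 0)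
include hb hcrit

theorem sqrtQuadLog_exp_nonpos (hT : 0 ≤ T) : sqrtQuadLog a b (exp T) ≤ 0 := by
  rw [sqrtQuadLog_exp]
  exact mul_nonpos_of_nonneg_of_nonpos (exp_pos _).le (by nlinarith)

theorem sqrtQuadLogDeriv_neg (hy : 1 ≤ y) (hyT : y < exp T) : sqrtQuadLogDeriv a b y < 0 := by
  have ht : 0 ≤ log y := log_nonneg hy
  have htT : log y < T := (log_lt_iff_lt_exp (by linarith)).2 hyT
  exact div_neg_of_neg_of_pos (by nlinarith [mul_pos hb (sub_pos.2 htT)])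
    (by have := sqrt_pos.2 (show 0 < y by linarith); positivity)

theorem strictConvexOn_sqrtQuadLog : StrictConvexOn ℝ (Icc 1 (exp T)) (sqrtQuadLog a b) := by
  refine StrictMonoOn.strictConvexOn_of_deriv (convex_Icc _ _)
    (continuousOn_sqrtQuadLog.mono fun y hy => lt_of_lt_of_le one_pos hy.1) ?_
  rw [interior_Icc]
  have hderiv : EqOn (deriv (sqrtQuadLog a b)) (sqrtQuadLogDeriv a b) (Ioo 1 (exp T)) :=
    fun y hy => (hasDerivAt_sqrtQuadLog (one_pos.trans hy.1)).deriv
  refine StrictMonoOn.congr ?_ hderiv.symm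
  refine strictMonoOn_of_hasDerivWithinAt_pos (convex_Ioo _ _)
    (fun y hy => (hasDerivAt_sqrtQuadLogDeriv (one_pos.trans hy.1)).continuousAt.continuousWithinAt)
    (fun y hy =>
      (hasDerivAt_sqrtQuadLogDeriv (one_pos.trans (interior_subset hy).1)).hasDerivWithinAt)
    fun y hy => ?_
  rw [interior_Ioo] at hy
  have hy0 : 0 < y := one_pos.trans hy.1
  have htT : log y < T := (log_lt_iff_lt_exp hy0).2 hy.2
  have ht : 0 < log y := log_pos hy.1
  have hsq : log y ^ 2 < T ^ 2 := by nlinarith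
  have : 0 < √y := sqrt_pos.2 hy0
  exact div_pos (by nlinarith [mul_lt_mul_of_pos_left hsq hb, mul_pos hb (ht.trans htT)])
    (by positivity)

theorem monotoneOn_sqrtQuadLog (hT : 0 ≤ T) : MonotoneOn (sqrtQuadLog a b) (Ici (exp T)) := by
  refine monotoneOn_of_hasDerivWithinAt_nonneg (convex_Ici _)
    (continuousOn_sqrtQuadLog.mono fun y hy => (exp_pos T).trans_le hy)
    (fun y hy =>
      (hasDerivAt_sqrtQuadLog ((exp_pos T).trans_le (interior_subset hy))).hasDerivWithinAt)
    fun y hy => ?_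
  rw [interior_Ici] at hy
  have hy0 : 0 < y := (exp_pos T).trans hy
  have htT : T < log y := (lt_log_iff_exp_lt hy0).2 hy
  have hfac : 0 ≤ b * (log y - T) * (log y + T + 4) :=
    mul_nonneg (mul_pos hb (sub_pos.2 htT)).le (by linarith)
  exact div_nonneg (by linear_combination hfac - hcrit) (by positivity)

theorem exists_pos_tangent_add_le_sqrtQuadLog {u p : ℝ} (hu : 1 ≤ u) (hup : u < p) :
    ∃ ε > 0, ∀ y ∈ Icc p (exp T),
      sqrtQuadLog a b u + sqrtQuadLogDeriv a b u * (y - u) + ε ≤ sqrtQuadLog a b y := by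
  refine isCompact_Icc.exists_pos_add_le (by fun_prop)
    (continuousOn_sqrtQuadLog.mono fun y hy => show 0 < y by linarith [hy.1]) fun y hy => ?_
  exact (strictConvexOn_sqrtQuadLog hb hcrit).add_mul_sub_lt_of_hasDerivAt
    ⟨hu, by linarith [hy.1, hy.2]⟩ ⟨by linarith [hy.1], hy.2⟩ (hup.trans_le hy.1)
    (hasDerivAt_sqrtQuadLog (by linarith))

end SqrtQuadLog

noncomputable abbrev Hleft (α δ lam : ℝ) : ℝ → ℝ :=
  sqrtQuadLog (-(lam / α ^ 2)) ((δ - lam / α) / (8 * α))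

noncomputable def hr₁ (α δ lam c x : ℝ) : ℝ :=
  δ * c * (c - 2 * x) + (δ - lam / α) * x ^ 2 + c - lam / α ^ 2

noncomputable def hr₂ (α lam B₀ c x : ℝ) : ℝ :=
  lam / α * c * (c - 2 * x) + c + B₀ * exp (-(x - c) * √(2 * α))

/-- The paper's `h_r(x; c)`. Its two branches agree at `x = f₀ + c` when `B₀` is the paper's
constant, so the choice made there is immaterial. -/
noncomputable def hrPiecewise (α δ lam f₀ B₀ c x : ℝ) : ℝ :=
  if x ≤ f₀ + c then hr₁ α δ lam c x else hr₂ α lam B₀ c x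

section Parameters

variable {α δ lam f₀ B₀ c x y : ℝ}

theorem Hleft_coeff_pos (hα : 0 < α) (hltd : lam < α * δ) : 0 < (δ - lam / α) / (8 * α) :=
  div_pos (sub_pos.2 ((div_lt_iff₀' hα).2 hltd)) (by positivity)

theorem f₀_pos_of_eq (hα : 0 < α) (hlam : 0 < lam) (hltd : lam < α * δ)
    (hf₀ : f₀ = (1 / √(2 * α)) * (√((α * δ + lam) / (α * δ - lam)) - 1)) : 0 < f₀ := by
  have hw : 1 < √((α * δ + lam) / (α * δ - lam)) := by
    rw [lt_sqrt zero_le_one, one_pow, one_lt_div (by linarith)]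
    linarith
  rw [hf₀]
  exact mul_pos (by positivity) (by linarith)

theorem critical_of_f₀_eq (hα : 0 < α) (hlam : 0 < lam) (hltd : lam < α * δ)
    (hf₀ : f₀ = (1 / √(2 * α)) * (√((α * δ + lam) / (α * δ - lam)) - 1)) :
    -(lam / α ^ 2) + (δ - lam / α) / (8 * α) * (2 * √(2 * α) * f₀) ^ 2 +
      4 * ((δ - lam / α) / (8 * α)) * (2 * √(2 * α) * f₀) = 0 := by
  set w := √((α * δ + lam) / (α * δ - lam))
  have hT : 2 * √(2 * α) * f₀ = 2 * (w - 1) := by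
    have : 0 < √(2 * α) := sqrt_pos.2 (by linarith)
    rw [hf₀]
    field_simp
  have hw2 : w ^ 2 * (α * δ - lam) = α * δ + lam := by
    rw [sq_sqrt (div_pos (by nlinarith) (by linarith)).le, div_mul_cancel₀ _ (by linarith)]
  rw [hT]
  field_simp
  linear_combination 4 * hw2

theorem B₀_eq_Hleft (hα : 0 < α)
    (hcrit : -(lam / α ^ 2) + (δ - lam / α) / (8 * α) * (2 * √(2 * α) * f₀) ^ 2 +
      4 * ((δ - lam / α) / (8 * α)) * (2 * √(2 * α) * f₀) = 0)
    (hB₀ : B₀ = -(2 * f₀ / (α * √(2 * α))) * (α * δ - lam) * exp (f₀ * √(2 * α))) :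
    B₀ = Hleft α δ lam (exp (2 * √(2 * α) * f₀)) := by
  have hs : 0 < √(2 * α) := sqrt_pos.2 (by linarith)
  have hs2 : √(2 * α) ^ 2 = 2 * α := sq_sqrt (by linarith)
  have hquad : -(lam / α ^ 2) + (δ - lam / α) / (8 * α) * (2 * √(2 * α) * f₀) ^ 2 =
      -(4 * ((δ - lam / α) / (8 * α)) * (2 * √(2 * α) * f₀)) := by linarith
  rw [Hleft, sqrtQuadLog_exp, hquad, hB₀, show 2 * √(2 * α) * f₀ / 2 = f₀ * √(2 * α) by ring]
  field_simp
  linear_combination 4 * f₀ * (α * δ - lam) * hs2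

theorem mul_sqrt_le_of_log_eq (hα : 0 < α) (hy : 0 < y) (hx : log y = 2 * √(2 * α) * x) :
    x * √y ≤ y / √(2 * α) := by
  have hs : 0 < √(2 * α) := sqrt_pos.2 (by linarith)
  have := log_mul_sqrt_le hy
  rw [hx] at this
  rw [le_div_iff₀ hs]
  linarith

theorem Hleft_sub_le_sqrt_mul_hr₁ (hα : 0 < α) (hδ : 0 ≤ δ) (hc : 0 ≤ c) (hy : 0 < y)
    (hx : log y = 2 * √(2 * α) * x) :
    Hleft α δ lam y - 2 * δ / √(2 * α) * c * y ≤ √y * hr₁ α δ lam c x := by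
  have hs : 0 < √(2 * α) := sqrt_pos.2 (by linarith)
  have hs2 : √(2 * α) ^ 2 = 2 * α := sq_sqrt (by linarith)
  have hsplit : √y * hr₁ α δ lam c x =
      Hleft α δ lam y + c * √y * (δ * c + 1) - 2 * δ * c * (x * √y) := by
    have hquad : (δ - lam / α) / (8 * α) * (2 * √(2 * α) * x) ^ 2 = (δ - lam / α) * x ^ 2 := by
      rw [mul_pow, mul_pow, hs2]
      field_simp
      ring
    rw [hr₁, Hleft, sqrtQuadLog, hx, hquad]
    ring
  have hbound : 2 * δ * c * (x * √y) ≤ 2 * δ / √(2 * α) * c * y :=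
    calc 2 * δ * c * (x * √y) ≤ 2 * δ * c * (y / √(2 * α)) :=
          mul_le_mul_of_nonneg_left (mul_sqrt_le_of_log_eq hα hy hx) (by positivity)
      _ = 2 * δ / √(2 * α) * c * y := by ring
  have : 0 ≤ c * √y * (δ * c + 1) := by positivity
  rw [hsplit]
  linarith

theorem sub_le_sqrt_mul_hr₂ (hα : 0 < α) (hlam : 0 ≤ lam) (hlamδ : lam ≤ α * δ) (hc : 0 ≤ c)
    (hy : 0 < y) (hx : log y = 2 * √(2 * α) * x) :
    B₀ * exp (√(2 * α) * c) - 2 * δ / √(2 * α) * c * y ≤ √y * hr₂ α lam B₀ c x := by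
  have hsqrt : √y = exp (√(2 * α) * x) := by
    rw [sqrt_eq_exp_log_div_two hy, hx]
    ring_nf
  have hshift : √y * exp (-(x - c) * √(2 * α)) = exp (√(2 * α) * c) := by
    rw [hsqrt, ← exp_add]
    ring_nf
  have hsplit : √y * hr₂ α lam B₀ c x =
      B₀ * exp (√(2 * α) * c) + c * √y * (lam / α * c + 1) - 2 * (lam / α) * c * (x * √y) := by
    rw [hr₂]
    linear_combination B₀ * hshift
  have hbound : 2 * (lam / α) * c * (x * √y) ≤ 2 * δ / √(2 * α) * c * y :=
    calc 2 * (lam / α) * c * (x * √y) ≤ 2 * (lam / α) * c * (y / √(2 * α)) :=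
          mul_le_mul_of_nonneg_left (mul_sqrt_le_of_log_eq hα hy hx) (by positivity)
      _ ≤ 2 * δ * c * (y / √(2 * α)) := by gcongr; exact (div_le_iff₀' hα).2 hlamδ
      _ = 2 * δ / √(2 * α) * c * y := by ring
  have : 0 ≤ c * √y * (lam / α * c + 1) := by positivity
  rw [hsplit]
  linarith

theorem Hleft_sub_le_sqrt_mul_hrPiecewise (hα : 0 < α) (hδ : 0 ≤ δ) (hc : 0 ≤ c)
    (hy : 0 < y) (hyq : y ≤ exp (2 * √(2 * α) * f₀)) :
    Hleft α δ lam y - 2 * δ / √(2 * α) * c * y ≤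
      √y * hrPiecewise α δ lam f₀ B₀ c (log y / (2 * √(2 * α))) := by
  have hs : 0 < √(2 * α) := sqrt_pos.2 (by linarith)
  have hlog : log y ≤ 2 * √(2 * α) * f₀ := (log_le_iff_le_exp hy).2 hyq
  rw [hrPiecewise, if_pos]
  · exact Hleft_sub_le_sqrt_mul_hr₁ hα hδ hc hy (by field_simp)
  · rw [div_le_iff₀ (by positivity)]
    nlinarith

theorem sub_le_sqrt_mul_hrPiecewise (hα : 0 < α) (hlam : 0 ≤ lam) (hltd : lam < α * δ)
    (hc : 0 ≤ c) (hf₀ : 0 ≤ f₀)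
    (hcrit : -(lam / α ^ 2) + (δ - lam / α) / (8 * α) * (2 * √(2 * α) * f₀) ^ 2 +
      4 * ((δ - lam / α) / (8 * α)) * (2 * √(2 * α) * f₀) = 0)
    (hB₀ : B₀ = Hleft α δ lam (exp (2 * √(2 * α) * f₀)))
    (hqy : exp (2 * √(2 * α) * f₀) ≤ y) :
    B₀ * exp (√(2 * α) * c) - 2 * δ / √(2 * α) * c * y ≤
      √y * hrPiecewise α δ lam f₀ B₀ c (log y / (2 * √(2 * α))) := by
  have hy : 0 < y := (exp_pos _).trans_le hqy
  have hx : log y = 2 * √(2 * α) * (log y / (2 * √(2 * α))) := by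
    have : 0 < √(2 * α) := sqrt_pos.2 (by linarith)
    field_simp
  have hδ : 0 < δ := (pos_iff_pos_of_mul_pos (hlam.trans_lt hltd)).1 hα
  have hb := Hleft_coeff_pos hα hltd
  have hT : 0 ≤ 2 * √(2 * α) * f₀ := by positivity
  rw [hrPiecewise]
  split_ifs
  · have hmin : B₀ ≤ Hleft α δ lam y :=
      hB₀ ▸ monotoneOn_sqrtQuadLog hb hcrit hT self_mem_Ici hqy hqy
    have hB₀_nonpos : B₀ ≤ 0 := hB₀ ▸ sqrtQuadLog_exp_nonpos hb hcrit hT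
    have hgrow : B₀ * exp (√(2 * α) * c) ≤ B₀ :=
      (mul_le_mul_of_nonpos_left (one_le_exp (by positivity)) hB₀_nonpos).trans_eq (mul_one B₀)
    linarith [Hleft_sub_le_sqrt_mul_hr₁ (lam := lam) hα hδ.le hc hy hx]
  · exact sub_le_sqrt_mul_hr₂ hα hlam hltd.le hc hy hx

end Parameters

theorem stmt_7_general (α δ lam : ℝ) (hα : 0 < α) (hδ : 0 < δ) (hlam : 0 < lam)
    (hltd : lam < α * δ)
    (f₀ : ℝ)
    (hf₀ : f₀ = (1 / Real.sqrt (2 * α)) * (Real.sqrt ((α * δ + lam) / (α * δ - lam)) - 1))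
    (Ψ : ℝ → ℝ) (hΨ : ∀ x, Ψ x = Real.exp (2 * Real.sqrt (2 * α) * x))
    (Hl : ℝ → ℝ)
    (hHl : ∀ y, 0 < y → Hl y = Real.sqrt y *
      (-(lam / α ^ 2) + ((δ - lam / α) / (8 * α)) * (Real.log y) ^ 2))
    (B₀ : ℝ)
    (hB₀ : B₀ = -(2 * f₀ / (α * Real.sqrt (2 * α))) * (α * δ - lam) *
      Real.exp (f₀ * Real.sqrt (2 * α)))
    (hr1 hr2 hr Hr : ℝ → ℝ → ℝ)
    (hhr1 : ∀ c x, hr1 c x = δ * c * (c - 2 * x) + (δ - lam / α) * x ^ 2 + c - lam / α ^ 2)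
    (hhr2 : ∀ c x, hr2 c x = (lam / α) * c * (c - 2 * x) + c +
      B₀ * Real.exp (-(x - c) * Real.sqrt (2 * α)))
    (hhra : ∀ c x, x ≤ f₀ + c → hr c x = hr1 c x)
    (hhrb : ∀ c x, f₀ + c ≤ x → hr c x = hr2 c x)
    (hHr : ∀ c y, 0 < y → Hr c y = Real.sqrt y * hr c (Real.log y / (2 * Real.sqrt (2 * α))))
    (y_u y_w : ℝ) (h1u : 1 < y_u) (huw : y_u < y_w) (hwf : y_w ≤ Ψ f₀) :
    ∃ cbar > 0, ∀ c, 0 < c → c < cbar → ∀ y, y_w ≤ y →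
      Hl y_u + deriv Hl y_u * (y - y_u) < Hr c y := by
  have hcrit := critical_of_f₀_eq hα hlam hltd hf₀
  have hb := Hleft_coeff_pos hα hltd
  have hf₀_pos := f₀_pos_of_eq hα hlam hltd hf₀
  have hT : 0 ≤ 2 * √(2 * α) * f₀ := by positivity
  have hB₀_eq := B₀_eq_Hleft hα hcrit hB₀
  rw [hΨ] at hwf
  have hHl_eq : Hl =ᶠ[𝓝 y_u] Hleft α δ lam :=
    eventually_of_mem (Ioi_mem_nhds (by linarith)) fun y hy => hHl y hy
  have hHr_eq : ∀ c y, 0 < y →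
      Hr c y = √y * hrPiecewise α δ lam f₀ B₀ c (log y / (2 * √(2 * α))) := by
    intro c y hy
    rw [hHr c y hy, hrPiecewise]
    split_ifs with h
    · rw [hhra c _ h, hhr1, hr₁]
    · rw [hhrb c _ (le_of_not_ge h), hhr2, hr₂]
  obtain ⟨ε, hε, hgap⟩ := exists_pos_tangent_add_le_sqrtQuadLog hb hcrit h1u.le huw
  obtain ⟨cbar, hcbar, hlt⟩ := exists_pos_forall_affine_lt (β := fun c => B₀ * exp (√(2 * α) * c))
    (sqrtQuadLogDeriv_neg hb hcrit h1u.le (huw.trans_le hwf)) (by positivity) hwf hε hgap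
    (by fun_prop) (by simp [hB₀_eq])
    (fun c hc y hy => hHr_eq c y (by linarith [hy.1]) ▸
      Hleft_sub_le_sqrt_mul_hrPiecewise hα hδ.le hc.le (by linarith [hy.1]) hy.2)
    (fun c hc y hy => hHr_eq c y ((exp_pos _).trans_le hy) ▸
      sub_le_sqrt_mul_hrPiecewise hα hlam.le hltd hc.le hf₀_pos.le hcrit hB₀_eq hy)
  refine ⟨cbar, hcbar, fun c hc hcb y hy => ?_⟩
  rw [hHl_eq.eq_of_nhds, hHl_eq.deriv_eq, (hasDerivAt_sqrtQuadLog (by linarith)).deriv]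
  exact hlt c hc hcb y hy

/-- for small c the tangent to H_l at y_u lies strictly below H_r(·;c)
on [y_w, ∞). -/
theorem stmt_7 (α δ lam : ℝ) (hα : 0 < α) (hδ : 0 < δ) (hlam : 0 < lam)
    (hltd : lam < α * δ)
    (f₀ : ℝ)
    (hf₀ : f₀ = (1 / Real.sqrt (2 * α)) * (Real.sqrt ((α * δ + lam) / (α * δ - lam)) - 1))
    (hf₀big : α / (2 * lam) < f₀)
    (Ψ : ℝ → ℝ) (hΨ : ∀ x, Ψ x = Real.exp (2 * Real.sqrt (2 * α) * x))
    (Hl : ℝ → ℝ)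
    (hHl : ∀ y, 0 < y → Hl y = Real.sqrt y *
      (-(lam / α ^ 2) + ((δ - lam / α) / (8 * α)) * (Real.log y) ^ 2))
    (B₀ : ℝ)
    (hB₀ : B₀ = -(2 * f₀ / (α * Real.sqrt (2 * α))) * (α * δ - lam) *
      Real.exp (f₀ * Real.sqrt (2 * α)))
    (hr1 hr2 hr Hr : ℝ → ℝ → ℝ)
    (hhr1 : ∀ c x, hr1 c x = δ * c * (c - 2 * x) + (δ - lam / α) * x ^ 2 + c - lam / α ^ 2)
    (hhr2 : ∀ c x, hr2 c x = (lam / α) * c * (c - 2 * x) + c +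
      B₀ * Real.exp (-(x - c) * Real.sqrt (2 * α)))
    (hhra : ∀ c x, x ≤ f₀ + c → hr c x = hr1 c x)
    (hhrb : ∀ c x, f₀ + c ≤ x → hr c x = hr2 c x)
    (hHr : ∀ c y, 0 < y → Hr c y = Real.sqrt y * hr c (Real.log y / (2 * Real.sqrt (2 * α))))
    (y_u y_w : ℝ) (h1u : 1 < y_u) (huw : y_u < y_w) (hwf : y_w ≤ Ψ f₀) :
    ∃ cbar > 0, ∀ c, 0 < c → c < cbar → ∀ y, y_w ≤ y →
      Hl y_u + deriv Hl y_u * (y - y_u) < Hr c y :=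
  stmt_7_general α δ lam hα hδ hlam hltd f₀ hf₀ Ψ hΨ Hl hHl B₀ hB₀ hr1 hr2 hr Hr hhr1 hhr2 hhra hhrb
    hHr y_u y_w h1u huw hwf
end

section
/- If 0 ≤ z < 1/(2δ) and z ≤ x < α/(2λ), then q(x;z) > 0. In particular q(z;z) = e^{z√(2α)}·(1−2δz) > 0 for 0 ≤ z < 1/(2δ), and ∂q/∂x(x;z) = λ·√(2/α)·(α/(2λ) − x)·e^{x√(2α)}·(1 − e^{2(z−x)√(2α)}) ≥ 0 for z ≤ x < α/(2λ). -/
/-!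
Write `s = √(2α)` and `a = α/(2λ)`. The term `√(2α)·(h₂(z) − h₁(z)e^{2zs})` does not depend
on `x`, and `ρ` cancels from it, leaving `−4·((αδ−λ)/(2α))·z·e^{zs}`; the rest of `q(x;z)` is
`(λ/α)·P(x)` with `P = qProfile a s z`. Hence
`q(z;z) = e^{zs}(1 − 2δz)`, and `P'(x) = s(a − x)(e^{xs} − e^{(2z−x)s})` is nonnegative for
`z ≤ x ≤ a`, so `q(x;z) ≥ q(z;z) > 0` there.
-/

open Real Set

noncomputable section

def qProfile (a c z x : ℝ) : ℝ :=
  (a - x - 1 / c) * exp ((2 * z - x) * c) - (x - a - 1 / c) * exp (x * c)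

end

theorem mul_qProfile_eq (k a c z x : ℝ) :
    k * (a - x - 1 / c) * exp (-x * c) * exp (2 * z * c) - k * (x - a - 1 / c) * exp (x * c) =
      k * qProfile a c z x := by
  rw [qProfile, mul_assoc _ (exp _), ← exp_add, show -x * c + 2 * z * c = (2 * z - x) * c by ring]
  ring

theorem qProfile_self (a c z : ℝ) : qProfile a c z z = 2 * (a - z) * exp (z * c) := by
  rw [qProfile, show 2 * z - z = z by ring]
  ring

theorem hasDerivAt_qProfile (a z x : ℝ) {c : ℝ} (hc : c ≠ 0) :
    HasDerivAt (qProfile a c z) (c * (a - x) * (exp (x * c) - exp ((2 * z - x) * c))) x := by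
  have hdecay : HasDerivAt (fun y => (2 * z - y) * c) (-c) x := by
    simpa using ((hasDerivAt_id x).const_sub (2 * z)).mul_const c
  have := (((hasDerivAt_id x).const_sub a).sub_const (1 / c)).mul hdecay.exp
    |>.sub ((((hasDerivAt_id x).sub_const a).sub_const (1 / c)).mul
      ((hasDerivAt_id x).mul_const c).exp)
  refine this.congr_deriv ?_
  simp only [id]
  field_simp
  ring

theorem qProfile_deriv_nonneg {a c z x : ℝ} (hc : 0 < c) (hzx : z ≤ x) (hxa : x ≤ a) :
    0 ≤ c * (a - x) * (exp (x * c) - exp ((2 * z - x) * c)) := by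
  have : exp ((2 * z - x) * c) ≤ exp (x * c) := exp_le_exp.mpr (by nlinarith)
  exact mul_nonneg (mul_nonneg hc.le (by linarith)) (by linarith)

theorem monotoneOn_qProfile (a z : ℝ) {c : ℝ} (hc : 0 < c) :
    MonotoneOn (qProfile a c z) (Icc z a) :=
  monotoneOn_of_hasDerivWithinAt_nonneg (convex_Icc z a)
    (fun x _ => (hasDerivAt_qProfile a z x hc.ne').continuousAt.continuousWithinAt)
    (fun x _ => (hasDerivAt_qProfile a z x hc.ne').hasDerivWithinAt)
    (fun x hx => by
      rw [interior_Icc] at hx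
      exact qProfile_deriv_nonneg hc hx.1.le hx.2.le)

theorem mul_sub_exp_mul_exp_eq (K r z : ℝ) {c : ℝ} (hc : c ≠ 0) :
    c * (K * exp (z * c) * (r - 4 * z / c) - K * exp (-z * c) * r * exp (2 * z * c)) =
      -4 * K * z * exp (z * c) := by
  have hexp : exp (-z * c) * exp (2 * z * c) = exp (z * c) := by
    rw [← exp_add]
    ring_nf
  linear_combination (norm := skip) (-c * K * r) * hexp
  field_simp
  ring

theorem sqrt_div_eq_sqrt_mul_div (x : ℝ) {y : ℝ} (hy : 0 ≤ y) :
    √(x / y) = √(x * y) / y := by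
  rw [sqrt_div' x hy, sqrt_mul' x hy, mul_div_assoc, sqrt_div_self, div_eq_mul_inv]

theorem stmt_17_general (α δ lam : ℝ) (hα : 0 < α) (hδ : 0 < δ) (hlam : 0 < lam)
    (ρ : ℝ → ℝ)
    (h₁ h₂ h₃ h₄ : ℝ → ℝ)
    (hh₁ : ∀ x, h₁ x = ((α * δ - lam) / (2 * α)) * Real.exp (-x * Real.sqrt (2 * α)) * ρ x)
    (hh₂ : ∀ x, h₂ x = ((α * δ - lam) / (2 * α)) * Real.exp (x * Real.sqrt (2 * α)) *
      (ρ x - 4 * x / Real.sqrt (2 * α)))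
    (hh₃ : ∀ x, h₃ x = (lam / α) * (α / (2 * lam) - x - 1 / Real.sqrt (2 * α)) *
      Real.exp (-x * Real.sqrt (2 * α)))
    (hh₄ : ∀ x, h₄ x = (lam / α) * (x - α / (2 * lam) - 1 / Real.sqrt (2 * α)) *
      Real.exp (x * Real.sqrt (2 * α)))
    (q : ℝ → ℝ → ℝ)
    (hq : ∀ x z, q x z = Real.sqrt (2 * α) *
      (h₂ z - h₁ z * Real.exp (2 * z * Real.sqrt (2 * α))) +
      h₃ x * Real.exp (2 * z * Real.sqrt (2 * α)) - h₄ x) :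
    (∀ z x : ℝ, 0 ≤ z → z < 1 / (2 * δ) → z ≤ x → x < α / (2 * lam) → 0 < q x z) ∧
    (∀ z : ℝ, 0 ≤ z → z < 1 / (2 * δ) →
      q z z = Real.exp (z * Real.sqrt (2 * α)) * (1 - 2 * δ * z) ∧ 0 < q z z) ∧
    (∀ z x : ℝ, z ≤ x → x < α / (2 * lam) →
      deriv (fun x' => q x' z) x = lam * Real.sqrt (2 / α) * (α / (2 * lam) - x) *
        Real.exp (x * Real.sqrt (2 * α)) *
        (1 - Real.exp (2 * (z - x) * Real.sqrt (2 * α))) ∧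
      0 ≤ deriv (fun x' => q x' z) x) := by
  rw [sqrt_div_eq_sqrt_mul_div 2 hα.le]
  set s := √(2 * α)
  have hs : 0 < s := sqrt_pos.mpr (by positivity)
  have hq_profile : ∀ z, (fun x => q x z) = fun x =>
      s * (h₂ z - h₁ z * exp (2 * z * s)) + lam / α * qProfile (α / (2 * lam)) s z x :=
    fun z => funext fun x => by rw [hq, hh₃, hh₄, ← mul_qProfile_eq]; ring
  have hdiag (z : ℝ) : q z z = exp (z * s) * (1 - 2 * δ * z) := by
    rw [congrFun (hq_profile z) z, hh₁, hh₂, mul_sub_exp_mul_exp_eq _ _ _ hs.ne', qProfile_self]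
    field_simp
    ring
  have hdiag_pos (z : ℝ) (hzδ : z < 1 / (2 * δ)) : 0 < q z z := by
    rw [lt_div_iff₀ (by positivity), mul_comm] at hzδ
    exact hdiag z ▸ mul_pos (exp_pos _) (by linarith)
  have hderiv (z x : ℝ) : HasDerivAt (fun x => q x z)
      (lam / α * (s * (α / (2 * lam) - x) * (exp (x * s) - exp ((2 * z - x) * s)))) x := by
    rw [hq_profile z]
    exact ((hasDerivAt_qProfile _ z x hs.ne').const_mul _).const_add _
  refine ⟨fun z x _ hzδ hzx hxa => ?_, fun z _ hzδ => ⟨hdiag z, hdiag_pos z hzδ⟩,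
    fun z x hzx hxa => ⟨?_, ?_⟩⟩
  · have hP := monotoneOn_qProfile (α / (2 * lam)) z hs
      ⟨le_rfl, hzx.trans hxa.le⟩ ⟨hzx, hxa.le⟩ hzx
    have hzz := hdiag_pos z hzδ
    rw [congrFun (hq_profile z) z] at hzz
    rw [congrFun (hq_profile z) x]
    nlinarith [div_pos hlam hα]
  · rw [(hderiv z x).deriv, show (2 * z - x) * s = x * s + 2 * (z - x) * s by ring, exp_add]
    field_simp
  · rw [(hderiv z x).deriv]
    exact mul_nonneg (by positivity) (qProfile_deriv_nonneg hs hzx hxa.le)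

/-- positivity of q(x;z) for 0 ≤ z < 1/(2δ) and z ≤ x < α/(2λ), together
with the formulas for q(z;z) and ∂q/∂x. -/
theorem stmt_17 (α δ lam : ℝ) (hα : 0 < α) (hδ : 0 < δ) (hlam : 0 < lam)
    (hltd : lam < α * δ)
    (ρ : ℝ → ℝ)
    (hρ : ∀ x, ρ x = x ^ 2 + 2 * x / Real.sqrt (2 * α) - (lam / α) / (α * δ - lam))
    (h₁ h₂ h₃ h₄ : ℝ → ℝ)
    (hh₁ : ∀ x, h₁ x = ((α * δ - lam) / (2 * α)) * Real.exp (-x * Real.sqrt (2 * α)) * ρ x)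
    (hh₂ : ∀ x, h₂ x = ((α * δ - lam) / (2 * α)) * Real.exp (x * Real.sqrt (2 * α)) *
      (ρ x - 4 * x / Real.sqrt (2 * α)))
    (hh₃ : ∀ x, h₃ x = (lam / α) * (α / (2 * lam) - x - 1 / Real.sqrt (2 * α)) *
      Real.exp (-x * Real.sqrt (2 * α)))
    (hh₄ : ∀ x, h₄ x = (lam / α) * (x - α / (2 * lam) - 1 / Real.sqrt (2 * α)) *
      Real.exp (x * Real.sqrt (2 * α)))
    (q : ℝ → ℝ → ℝ)
    (hq : ∀ x z, q x z = Real.sqrt (2 * α) *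
      (h₂ z - h₁ z * Real.exp (2 * z * Real.sqrt (2 * α))) +
      h₃ x * Real.exp (2 * z * Real.sqrt (2 * α)) - h₄ x) :
    (∀ z x : ℝ, 0 ≤ z → z < 1 / (2 * δ) → z ≤ x → x < α / (2 * lam) → 0 < q x z) ∧
    (∀ z : ℝ, 0 ≤ z → z < 1 / (2 * δ) →
      q z z = Real.exp (z * Real.sqrt (2 * α)) * (1 - 2 * δ * z) ∧ 0 < q z z) ∧
    (∀ z x : ℝ, z ≤ x → x < α / (2 * lam) →
      deriv (fun x' => q x' z) x = lam * Real.sqrt (2 / α) * (α / (2 * lam) - x) *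
        Real.exp (x * Real.sqrt (2 * α)) *
        (1 - Real.exp (2 * (z - x) * Real.sqrt (2 * α))) ∧
      0 ≤ deriv (fun x' => q x' z) x) :=
  stmt_17_general α δ lam hα hδ hlam ρ h₁ h₂ h₃ h₄ hh₁ hh₂ hh₃ hh₄ q hq
end

section
/- Let λ>0, α>0 and C, D ∈ ℝ, and define U(x) = (2λ/α)x + C·e^{x√(2α)} + D·e^{−x√(2α)}. (i) If the derivative U' has two distinct real zeros, then C < 0, C·D < 0, and U' is strictly concave on ℝ. (ii) Consequently, if U'(G) > 0 for some G ∈ ℝ, then U' has at most one zero in the interval (−∞, G); in particular U has at most one turning point in any interval (F, G) with F < G. -/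
/-!
Write `s = √(2α)`, so that `U' x = 2λ/α + C s e^{xs} - D s e^{-xs}`. Multiplying by `u = e^{xs} > 0`
turns the zeros of `U'` into the positive roots of the quadratic `C s u² + (2λ/α) u - D s`;
two distinct positive roots force, by Vieta, `C s < 0` and `-D s < 0`. Then `U'` is a constant
plus two negative multiples of strictly convex exponentials, hence strictly concave, and a
strictly concave function vanishing at `x₁ < x₂` is negative to the right of `x₂`.
-/

open Real Set

lemma coeffs_neg_of_two_pos_roots {a b c u₁ u₂ : ℝ} (hb : 0 < b) (hu₁ : 0 < u₁) (hu₂ : 0 < u₂)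
    (hne : u₁ ≠ u₂) (h₁ : a * u₁ ^ 2 + b * u₁ + c = 0) (h₂ : a * u₂ ^ 2 + b * u₂ + c = 0) :
    a < 0 ∧ c < 0 := by
  have hsum : a * (u₁ + u₂) + b = 0 := by
    have h : (u₁ - u₂) * (a * (u₁ + u₂) + b) = 0 := by linear_combination h₁ - h₂
    exact (mul_eq_zero.1 h).resolve_left (sub_ne_zero.2 hne)
  have hprod : c = a * (u₁ * u₂) := by linear_combination h₁ - u₁ * hsum
  have ha : a < 0 := by nlinarith
  exact ⟨ha, hprod ▸ mul_neg_of_neg_of_pos ha (mul_pos hu₁ hu₂)⟩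

lemma hasDerivAt_mul_exp_mul (c s x : ℝ) :
    HasDerivAt (fun x => c * exp (x * s)) (c * s * exp (x * s)) x := by
  have h := (((hasDerivAt_id x).mul_const s).exp).const_mul c
  simp only [id, one_mul] at h
  exact h.congr_deriv (by ring)

lemma deriv_linear_add_exp (k C D s t : ℝ) :
    deriv (fun x => k * x + C * exp (x * s) + D * exp (x * t)) =
      fun x => k + C * s * exp (x * s) + D * t * exp (x * t) := by
  funext x
  have hlin : HasDerivAt (fun x => k * x) k x := by
    simpa using (hasDerivAt_id x).const_mul k
  exact ((hlin.add (hasDerivAt_mul_exp_mul C s x)).add (hasDerivAt_mul_exp_mul D t x)).deriv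

lemma strictConcaveOn_mul_exp_mul {c s : ℝ} (hc : c < 0) (hs : s ≠ 0) :
    StrictConcaveOn ℝ univ (fun x => c * exp (x * s)) := by
  refine ⟨convex_univ, fun x _ y _ hxy θ η hθ hη hθη => ?_⟩
  have h := strictConvexOn_exp.2 (mem_univ (x * s)) (mem_univ (y * s))
    (fun h => hxy (mul_right_cancel₀ hs h)) hθ hη hθη
  simp only [smul_eq_mul] at h ⊢
  rw [add_mul, mul_assoc, mul_assoc]
  nlinarith [mul_lt_mul_of_neg_left h hc]

lemma strictConcaveOn_const_add_mul_exp_add_mul_exp {k a b s t : ℝ} (ha : a < 0) (hb : b < 0)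
    (hs : s ≠ 0) (ht : t ≠ 0) :
    StrictConcaveOn ℝ univ (fun x => k + a * exp (x * s) + b * exp (x * t)) :=
  ((concaveOn_const k convex_univ).add_strictConcaveOn (strictConcaveOn_mul_exp_mul ha hs)).add
    (strictConcaveOn_mul_exp_mul hb ht)

lemma coeffs_neg_of_two_zeros {k a b s x₁ x₂ : ℝ} (hk : 0 < k) (hs : s ≠ 0) (hne : x₁ ≠ x₂)
    (h₁ : k + a * exp (x₁ * s) + b * exp (x₁ * -s) = 0)
    (h₂ : k + a * exp (x₂ * s) + b * exp (x₂ * -s) = 0) :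
    a < 0 ∧ b < 0 := by
  have quadratic : ∀ x, k + a * exp (x * s) + b * exp (x * -s) = 0 →
      a * exp (x * s) ^ 2 + k * exp (x * s) + b = 0 := by
    intro x hx
    have hinv : exp (x * s) * exp (x * -s) = 1 := by rw [← exp_add]; simp
    linear_combination exp (x * s) * hx - b * hinv
  refine coeffs_neg_of_two_pos_roots hk (exp_pos _) (exp_pos _) ?_ (quadratic x₁ h₁)
    (quadratic x₂ h₂)
  exact fun h => hne (mul_right_cancel₀ hs (exp_injective h))

lemma StrictConcaveOn.eq_of_apply_eq_zero_of_lt {S : Set ℝ} {f : ℝ → ℝ}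
    (hf : StrictConcaveOn ℝ S f) {x₁ x₂ y : ℝ} (hx₁ : x₁ ∈ S) (hx₂ : x₂ ∈ S) (hy : y ∈ S)
    (hfy : 0 ≤ f y) (h₁ : x₁ < y) (h₂ : x₂ < y) (hf₁ : f x₁ = 0) (hf₂ : f x₂ = 0) : x₁ = x₂ := by
  wlog hlt : x₁ < x₂ generalizing x₁ x₂
  · rcases (not_lt.1 hlt).lt_or_eq with h | h
    · exact (this hx₂ hx₁ h₂ h₁ hf₂ hf₁ h).symm
    · exact h.symm
  have h := hf.slope_anti_adjacent hx₁ hy hlt h₂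
  rw [hf₁, hf₂, sub_zero, sub_self, zero_div] at h
  exact absurd h (not_lt.2 (div_nonneg hfy (sub_pos.2 h₂).le))

/-- if U'(x), with U(x) = (2λ/α)x + C·e^{x√(2α)} + D·e^{−x√(2α)}, has two
distinct zeros then C < 0, C·D < 0 and U' is strictly concave; consequently if U'(G) > 0
then U' has at most one zero on (−∞,G), and in particular U has at most one turning point
in any interval (F,G). -/
theorem stmt_19 (α lam C D : ℝ) (hα : 0 < α) (hlam : 0 < lam)
    (U : ℝ → ℝ)
    (hU : ∀ x, U x = (2 * lam / α) * x + C * Real.exp (x * Real.sqrt (2 * α)) +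
      D * Real.exp (-x * Real.sqrt (2 * α))) :
    ((∃ x₁ x₂ : ℝ, x₁ ≠ x₂ ∧ deriv U x₁ = 0 ∧ deriv U x₂ = 0) →
      C < 0 ∧ C * D < 0 ∧ StrictConcaveOn ℝ Set.univ (deriv U)) ∧
    (∀ G : ℝ, 0 < deriv U G →
      (∀ x₁ ∈ Set.Iio G, ∀ x₂ ∈ Set.Iio G, deriv U x₁ = 0 → deriv U x₂ = 0 → x₁ = x₂) ∧
      ∀ F : ℝ, F < G → ∀ x₁ ∈ Set.Ioo F G, ∀ x₂ ∈ Set.Ioo F G,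
        deriv U x₁ = 0 → deriv U x₂ = 0 → x₁ = x₂) := by
  set s := √(2 * α)
  set k := 2 * lam / α
  have hs : 0 < s := sqrt_pos.2 (by linarith)
  have hk : 0 < k := by positivity
  have hdU : deriv U = fun x => k + C * s * exp (x * s) + D * -s * exp (x * -s) := by
    rw [← deriv_linear_add_exp]
    congr 1
    funext x
    rw [hU, neg_mul, mul_neg]
  have concave_of_two_zeros : (∃ x₁ x₂ : ℝ, x₁ ≠ x₂ ∧ deriv U x₁ = 0 ∧ deriv U x₂ = 0) →
      C < 0 ∧ C * D < 0 ∧ StrictConcaveOn ℝ univ (deriv U) := by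
    rintro ⟨x₁, x₂, hne, h₁, h₂⟩
    rw [hdU] at h₁ h₂ ⊢
    obtain ⟨ha, hb⟩ := coeffs_neg_of_two_zeros hk hs.ne' hne h₁ h₂
    have hC : C < 0 := by nlinarith
    have hD : 0 < D := by nlinarith
    exact ⟨hC, mul_neg_of_neg_of_pos hC hD,
      strictConcaveOn_const_add_mul_exp_add_mul_exp ha hb hs.ne' (neg_ne_zero.2 hs.ne')⟩
  refine ⟨concave_of_two_zeros, fun G hG => ?_⟩
  have below : ∀ x₁ ∈ Iio G, ∀ x₂ ∈ Iio G, deriv U x₁ = 0 → deriv U x₂ = 0 → x₁ = x₂ := by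
    intro x₁ hx₁ x₂ hx₂ h₁ h₂
    by_contra hne
    have hconc := (concave_of_two_zeros ⟨x₁, x₂, hne, h₁, h₂⟩).2.2
    exact hne (hconc.eq_of_apply_eq_zero_of_lt trivial trivial trivial hG.le hx₁ hx₂ h₁ h₂)
  exact ⟨below, fun F _ x₁ hx₁ x₂ hx₂ => below x₁ hx₁.2 x₂ hx₂.2⟩
end
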